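/- arXiv:2101.06033 — 5 statements merged into one kernel-verified Lean document; each statement's English description precedes it below -/
import Mathlib

section
/- Let q ≥ 2 and ℓ ≥ 2 be integers and Σ an alphabet of size q. A vector x : Σ^ℓ → ℕ with all entries positive is feasible (i.e., x equals the profile vector of order ℓ of some finite string over Σ) if and only if the De Bruijn graph G_{q,ℓ-1}, equipped with edge weights wt(w) = x(w) for each edge w ∈ Σ^ℓ, is balanced. -/
open Finset

abbrev Wd (q ℓ : ℕ) := Fin ℓ → Fin q

def cyclicOcc {q n ℓ : ℕ} (s : Fin n → Fin q) (w : Wd q ℓ) : ℕ :=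
  (Finset.univ.filter fun i : Fin n =>
    ∀ j : Fin ℓ, s ⟨(i.1 + j.1) % n, Nat.mod_lt _ i.pos⟩ = w j).card

/-- `x` is the profile vector of order `ℓ` of some finite string over `Fin q`. -/
def IsFeasibleVec {q ℓ : ℕ} (x : Wd q ℓ → ℕ) : Prop :=
  ∃ (n : ℕ) (s : Fin n → Fin q), ∀ w, x w = cyclicOcc s w

/-- source of the De Bruijn edge `w : Σ^ℓ` : its length-`(ℓ-1)` prefix. -/
def dbSrc {q ℓ : ℕ} (w : Wd q ℓ) : Wd q (ℓ - 1) :=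
  fun i => w ⟨i.1, by have := i.isLt; omega⟩

/-- destination of the De Bruijn edge `w : Σ^ℓ` : its length-`(ℓ-1)` suffix. -/
def dbDst {q ℓ : ℕ} (w : Wd q ℓ) : Wd q (ℓ - 1) :=
  fun i => w ⟨i.1 + 1, by have := i.isLt; omega⟩

structure CW (q ℓ : ℕ) where
  n : ℕ
  f : Fin (n+1) → Wd q ℓ
  adj : ∀ i, dbDst (f i) = dbSrc (f (i+1))

def CW.count {q ℓ : ℕ} (c : CW q ℓ) (w : Wd q ℓ) : ℕ :=
  (Finset.univ.filter fun i => c.f i = w).card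

-- fiber lemma
lemma fiber {α : Type*} [Fintype α] [DecidableEq α] {q ℓ : ℕ}
    (g : α → Wd q ℓ) (P : Wd q ℓ → Prop) [DecidablePred P] :
    ∑ w ∈ Finset.univ.filter P, (Finset.univ.filter fun i => g i = w).card =
      (Finset.univ.filter fun i => P (g i)).card := by
  rw [Finset.card_eq_sum_card_fiberwise (f := g) (t := Finset.univ.filter P)
    (fun i hi => by simp at hi ⊢; exact hi)]
  refine Finset.sum_congr rfl fun w hw => ?_
  congr 1
  ext i
  simp at hw ⊢
  rintro rfl
  exact hw

-- balance of an adjacency system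
lemma bal_sys {q ℓ n : ℕ} (f : Fin (n+1) → Wd q ℓ)
    (adj : ∀ i, dbDst (f i) = dbSrc (f (i+1))) (v : Wd q (ℓ-1)) :
    (Finset.univ.filter fun i => dbDst (f i) = v).card =
      (Finset.univ.filter fun i => dbSrc (f i) = v).card := by
  refine Finset.card_bij' (fun i _ => i + 1) (fun j _ => j - 1) ?_ ?_ ?_ ?_
  · intro i hi; simp at hi ⊢; rw [← adj i]; exact hi
  · intro j hj; simp at hj ⊢; rw [adj (j-1), sub_add_cancel]; exact hj
  · intro i _; exact add_sub_cancel_right i 1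
  · intro j _; exact sub_add_cancel j 1

lemma CW.balanced {q ℓ : ℕ} (c : CW q ℓ) (v : Wd q (ℓ-1)) :
    ∑ w ∈ Finset.univ.filter (fun w : Wd q ℓ => dbDst w = v), c.count w =
      ∑ w ∈ Finset.univ.filter (fun w : Wd q ℓ => dbSrc w = v), c.count w := by
  unfold CW.count
  rw [fiber c.f (fun w => dbDst w = v), fiber c.f (fun w => dbSrc w = v)]
  exact bal_sys c.f c.adj v

lemma CW.adj_apply {q ℓ : ℕ} (c : CW q ℓ) (i : Fin (c.n+1)) (jv : ℕ) (h : jv + 1 < ℓ) :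
    c.f i ⟨jv+1, h⟩ = c.f (i+1) ⟨jv, by omega⟩ := by
  have h2 : jv < ℓ - 1 := by omega
  have := congrFun (c.adj i) ⟨jv, h2⟩
  simpa [dbDst, dbSrc] using this

open Fin.NatCast Fin.CommRing in
lemma CW.shift {q ℓ : ℕ} (c : CW q ℓ) (t : ℕ) :
    ∀ (i : Fin (c.n+1)) (jv : ℕ) (h : jv + t < ℓ),
      c.f i ⟨jv + t, h⟩ = c.f (i + (t : Fin (c.n+1))) ⟨jv, by omega⟩ := by
  induction t with
  | zero => intro i jv h; simp
  | succ t ih =>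
      intro i jv h
      have h1 : jv + (t+1) = (jv + 1) + t := by omega
      have e0 : (⟨jv + (t+1), h⟩ : Fin ℓ) = ⟨(jv+1) + t, by omega⟩ := by
        apply Fin.ext; show jv + (t+1) = (jv+1) + t; omega
      have e1 : c.f i ⟨jv + (t+1), h⟩ = c.f i ⟨(jv+1) + t, by omega⟩ := by rw [e0]
      rw [e1, ih i (jv+1) (by omega), c.adj_apply _ jv (by omega)]
      congr 1
      push_cast
      ring

open Fin.NatCast Fin.CommRing in
/-- From a closed walk, build a string whose profile equals the edge counts. -/
lemma CW.toString {q ℓ : ℕ} (hℓ : 2 ≤ ℓ) (c : CW q ℓ) :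
    ∃ (n : ℕ) (s : Fin n → Fin q), ∀ w, cyclicOcc s w = c.count w := by
  refine ⟨c.n + 1, fun i => c.f i ⟨0, by omega⟩, fun w => ?_⟩
  unfold cyclicOcc CW.count
  congr 1
  ext i
  simp only [Finset.mem_filter, Finset.mem_univ, true_and]
  have key : ∀ j : Fin ℓ,
      c.f (⟨(i.1 + j.1) % (c.n+1), Nat.mod_lt _ i.pos⟩ : Fin (c.n+1)) ⟨0, by omega⟩
        = c.f i j := by
    intro j
    have e2 : (⟨(i.1 + j.1) % (c.n+1), Nat.mod_lt _ i.pos⟩ : Fin (c.n+1))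
        = i + (j.1 : Fin (c.n+1)) := by
      apply Fin.ext
      simp [Fin.add_def, Fin.val_natCast, Nat.add_mod]
    rw [e2, ← c.shift j.1 i 0 (by omega)]
    congr 1
    exact Fin.ext (by simp)
  constructor
  · intro hyp; funext j; rw [← key j]; exact hyp j
  · intro hyp j; rw [key j, hyp]

/-- From a string, build a closed walk with counts = profile. -/
lemma string_to_CW {q ℓ m : ℕ} (hℓ : 2 ≤ ℓ) (s : Fin (m+1) → Fin q) :
    ∃ c : CW q ℓ, ∀ w, cyclicOcc s w = c.count w := by
  classical
  refine ⟨⟨m, fun i j => s ⟨(i.1 + j.1) % (m+1), Nat.mod_lt _ (Nat.succ_pos m)⟩, ?_⟩, ?_⟩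
  · intro i
    funext jv
    simp only [dbDst, dbSrc]
    congr 1
    apply Fin.ext
    show (i.1 + (jv.1+1)) % (m+1) = ((i + 1).1 + jv.1) % (m+1)
    rw [Fin.add_def, Nat.mod_add_mod]
    have : i.1 + (1 : Fin (m+1)).1 + jv.1 = i.1 + jv.1 + 1 % (m+1) := by
      rw [Fin.val_one']; ring
    rw [this, Nat.add_mod_mod]
    congr 1
  · intro w
    unfold cyclicOcc CW.count
    congr 1
    ext i
    simp only [Finset.mem_filter, Finset.mem_univ, true_and, funext_iff]

lemma fin_add_one_val {n : ℕ} (i : Fin (n+1)) :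
    ((i + 1 : Fin (n+1))).1 = if i.1 = n then 0 else i.1 + 1 := by
  rw [Fin.val_add_one]
  by_cases h : i = Fin.last n
  · rw [if_pos h, if_pos (by rw [h]; rfl)]
  · rw [if_neg h, if_neg (fun hv => h (Fin.ext (by rw [hv]; rfl)))]

def CW.visits {q ℓ : ℕ} (c : CW q ℓ) (v : Wd q (ℓ-1)) : Prop :=
  ∃ i, dbSrc (c.f i) = v

def CW.rot {q ℓ : ℕ} (c : CW q ℓ) (k : Fin (c.n+1)) : CW q ℓ :=
  ⟨c.n, fun i => c.f (k + i), fun i => by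
    have := c.adj (k + i)
    rwa [add_assoc] at this⟩

lemma CW.rot_count {q ℓ : ℕ} (c : CW q ℓ) (k : Fin (c.n+1)) (w : Wd q ℓ) :
    (c.rot k).count w = c.count w := by
  unfold CW.count CW.rot
  refine Finset.card_bij' (fun i _ => k + i) (fun j _ => j - k) ?_ ?_ ?_ ?_
  · intro i hi; simpa using (Finset.mem_filter.mp hi).2
  · intro j hj; simp only [Finset.mem_filter, Finset.mem_univ, true_and] at hj ⊢
    exact (congrArg c.f (show k + (j - k) = j by
      rw [add_comm k (j - k)]; exact sub_add_cancel j k)).trans hj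
  · intro i _; show (k + i) - k = i; rw [add_comm k i]; exact add_sub_cancel_right i k
  · intro j _; show k + (j - k) = j; rw [add_comm k (j - k)]; exact sub_add_cancel j k

section Splice
variable {q ℓ : ℕ} (A B : CW q ℓ)

def spliceF : Fin (A.n + 1 + B.n + 1) → Wd q ℓ := fun i =>
  if h : i.1 ≤ A.n then A.f ⟨i.1, by omega⟩ else B.f ⟨i.1 - (A.n+1), by omega⟩

lemma spliceF_low {i : Fin (A.n + 1 + B.n + 1)} (h : i.1 ≤ A.n) :
    spliceF A B i = A.f ⟨i.1, by omega⟩ := dif_pos h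

lemma spliceF_high {i : Fin (A.n + 1 + B.n + 1)} (h : ¬ i.1 ≤ A.n) :
    spliceF A B i = B.f ⟨i.1 - (A.n+1), by omega⟩ := dif_neg h

lemma spliceF_low' (m : ℕ) (hm : m < A.n + 1 + B.n + 1) (h : m ≤ A.n) :
    spliceF A B ⟨m, hm⟩ = A.f ⟨m, by omega⟩ := dif_pos h

lemma spliceF_high' (m : ℕ) (hm : m < A.n + 1 + B.n + 1) (h : ¬ m ≤ A.n) :
    spliceF A B ⟨m, hm⟩ = B.f ⟨m - (A.n+1), by omega⟩ := dif_neg h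

lemma splice_adj (hAB : dbSrc (A.f 0) = dbSrc (B.f 0)) :
    ∀ i : Fin (A.n + 1 + B.n + 1), dbDst (spliceF A B i) = dbSrc (spliceF A B (i + 1)) := by
  intro i
  have hiN : i.1 < A.n + 1 + B.n + 1 := i.isLt
  have hv := fin_add_one_val i
  rcases lt_trichotomy i.1 A.n with h1 | h1 | h1
  · have hv' : (i+1).1 = i.1 + 1 := by rw [hv, if_neg (by omega)]
    rw [spliceF_low A B (by omega : i.1 ≤ A.n),
        spliceF_low A B (by omega : (i+1).1 ≤ A.n)]
    have hA := A.adj ⟨i.1, by omega⟩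
    have e1 : ((⟨i.1, by omega⟩ : Fin (A.n+1)) + 1) = ⟨(i+1).1, by omega⟩ := by
      apply Fin.ext
      rw [fin_add_one_val]
      show (if i.1 = A.n then 0 else i.1 + 1) = (i+1).1
      rw [if_neg (by omega), hv']
    rw [← e1]
    exact hA
  · have hv' : (i+1).1 = A.n + 1 := by rw [hv, if_neg (by omega), h1]
    rw [spliceF_low A B (by omega : i.1 ≤ A.n),
        spliceF_high A B (by omega : ¬ (i+1).1 ≤ A.n)]
    have hA := A.adj ⟨i.1, by omega⟩
    have e1 : ((⟨i.1, by omega⟩ : Fin (A.n+1)) + 1) = 0 := by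
      apply Fin.ext
      rw [fin_add_one_val]
      show (if i.1 = A.n then 0 else i.1 + 1) = 0
      rw [if_pos h1]
    rw [e1] at hA
    rw [hA, hAB]
    have e2 : (⟨(i+1).1 - (A.n+1), by omega⟩ : Fin (B.n+1)) = 0 := by
      apply Fin.ext
      show (i+1).1 - (A.n+1) = 0
      omega
    rw [e2]
  · rcases lt_trichotomy i.1 (A.n + 1 + B.n) with h2 | h2 | h2
    · have hv' : (i+1).1 = i.1 + 1 := by rw [hv, if_neg (by omega)]
      rw [spliceF_high A B (by omega : ¬ i.1 ≤ A.n),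
          spliceF_high A B (by omega : ¬ (i+1).1 ≤ A.n)]
      have hB := B.adj ⟨i.1 - (A.n+1), by omega⟩
      have e1 : ((⟨i.1 - (A.n+1), by omega⟩ : Fin (B.n+1)) + 1)
          = ⟨(i+1).1 - (A.n+1), by omega⟩ := by
        apply Fin.ext
        rw [fin_add_one_val]
        show (if i.1 - (A.n+1) = B.n then 0 else i.1 - (A.n+1) + 1) = (i+1).1 - (A.n+1)
        rw [if_neg (by omega), hv']
        omega
      rw [← e1]
      exact hB
    · have hv' : (i+1).1 = 0 := by rw [hv, if_pos (by omega)]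
      rw [spliceF_high A B (by omega : ¬ i.1 ≤ A.n),
          spliceF_low A B (by omega : (i+1).1 ≤ A.n)]
      have hB := B.adj ⟨i.1 - (A.n+1), by omega⟩
      have e1 : ((⟨i.1 - (A.n+1), by omega⟩ : Fin (B.n+1)) + 1) = 0 := by
        apply Fin.ext
        rw [fin_add_one_val]
        show (if i.1 - (A.n+1) = B.n then 0 else i.1 - (A.n+1) + 1) = 0
        rw [if_pos (by omega)]
      rw [e1] at hB
      rw [hB, ← hAB]
      have e2 : (⟨(i+1).1, by omega⟩ : Fin (A.n+1)) = 0 := by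
        apply Fin.ext
        show (i+1).1 = 0
        exact hv'
      rw [e2]
    · omega

lemma splice_count (w : Wd q ℓ) :
    (Finset.univ.filter fun i => spliceF A B i = w).card = A.count w + B.count w := by
  classical
  rw [← Finset.card_filter_add_card_filter_not
    (s := Finset.univ.filter fun i => spliceF A B i = w) (p := fun i => i.1 ≤ A.n)]
  congr 1
  · unfold CW.count
    refine Finset.card_bij' (fun i _ => (⟨min i.1 A.n, by omega⟩ : Fin (A.n+1)))
      (fun j _ => (⟨j.1, by omega⟩ : Fin (A.n+1+B.n+1))) ?_ ?_ ?_ ?_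
    · intro i hi
      simp only [Finset.mem_filter, Finset.mem_univ, true_and] at hi ⊢
      obtain ⟨h1, h2⟩ := hi
      rw [show (⟨min i.1 A.n, by omega⟩ : Fin (A.n+1)) = ⟨i.1, by omega⟩ from
        Fin.ext (by show min i.1 A.n = i.1; omega)]
      exact (spliceF_low A B h2).symm.trans h1
    · intro j hj
      simp only [Finset.mem_filter, Finset.mem_univ, true_and] at hj ⊢
      have hb : j.1 ≤ A.n := by omega
      refine ⟨?_, hb⟩
      rw [spliceF_low' A B j.1 (by omega) hb]
      exact (congrArg A.f (Fin.ext rfl)).trans hj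
    · intro i hi
      simp only [Finset.mem_filter, Finset.mem_univ, true_and] at hi
      apply Fin.ext
      show min i.1 A.n = i.1
      omega
    · intro j _
      apply Fin.ext
      show min j.1 A.n = j.1
      omega
  · unfold CW.count
    refine Finset.card_bij' (fun i _ => (⟨i.1 - (A.n+1), by omega⟩ : Fin (B.n+1)))
      (fun j _ => (⟨j.1 + (A.n+1), by omega⟩ : Fin (A.n+1+B.n+1))) ?_ ?_ ?_ ?_
    · intro i hi
      simp only [Finset.mem_filter, Finset.mem_univ, true_and, not_le] at hi ⊢
      obtain ⟨h1, h2⟩ := hi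
      exact (spliceF_high A B (by omega)).symm.trans h1
    · intro j hj
      simp only [Finset.mem_filter, Finset.mem_univ, true_and, not_le] at hj ⊢
      refine ⟨?_, by omega⟩
      rw [spliceF_high' A B (j.1 + (A.n+1)) (by omega) (by omega)]
      refine (congrArg B.f (Fin.ext ?_)).trans hj
      show j.1 + (A.n+1) - (A.n+1) = j.1
      omega
    · intro i hi
      simp only [Finset.mem_filter, Finset.mem_univ, true_and, not_le] at hi
      apply Fin.ext
      show i.1 - (A.n+1) + (A.n+1) = i.1
      omega
    · intro j _
      apply Fin.ext
      show j.1 + (A.n+1) - (A.n+1) = j.1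
      omega

end Splice

lemma CW.merge {q ℓ : ℕ} (c d : CW q ℓ) (v : Wd q (ℓ-1))
    (hc : c.visits v) (hd : d.visits v) :
    ∃ e : CW q ℓ, (∀ w, e.count w = c.count w + d.count w) ∧
      ∀ u, (c.visits u ∨ d.visits u) → e.visits u := by
  classical
  obtain ⟨ic, hic⟩ := hc
  obtain ⟨jd, hid⟩ := hd
  have hc0 : dbSrc ((c.rot ic).f 0) = v := by
    show dbSrc (c.f (ic + 0)) = v; rwa [add_zero]
  have hd0 : dbSrc ((d.rot jd).f 0) = v := by
    show dbSrc (d.f (jd + 0)) = v; rwa [add_zero]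
  set A := c.rot ic with hA
  set B := d.rot jd with hB
  have hAn : A.n = c.n := rfl
  have hBn : B.n = d.n := rfl
  have hAB : dbSrc (A.f 0) = dbSrc (B.f 0) := by rw [hc0, hd0]
  refine ⟨⟨A.n + 1 + B.n, spliceF A B, splice_adj A B hAB⟩, fun w => ?_, ?_⟩
  · show (Finset.univ.filter fun i => spliceF A B i = w).card = _
    rw [splice_count A B w, hA, hB, c.rot_count, d.rot_count]
  · rintro u (⟨j, hj⟩ | ⟨j, hj⟩)
    · have e0 : ic + (j - ic) = j := by
        rw [add_comm ic (j - ic)]; exact sub_add_cancel j ic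
      have hval : dbSrc (A.f (j - ic)) = u := by
        show dbSrc (c.f (ic + (j - ic))) = u
        rw [congrArg c.f e0]; exact hj
      have hjb : ((j - ic) : Fin (c.n+1)).1 ≤ A.n := by
        have := ((j - ic) : Fin (c.n+1)).isLt; omega
      refine ⟨⟨((j - ic) : Fin (c.n+1)).1,
        by show ((j - ic) : Fin (c.n+1)).1 < A.n + 1 + B.n + 1; omega⟩, ?_⟩
      show dbSrc (spliceF A B ⟨((j - ic) : Fin (c.n+1)).1,
        by show ((j - ic) : Fin (c.n+1)).1 < A.n + 1 + B.n + 1; omega⟩) = u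
      rw [spliceF_low A B hjb]
      have e : (⟨((j - ic) : Fin (c.n+1)).1, by omega⟩ : Fin (A.n+1)) = j - ic :=
        Fin.ext rfl
      rw [e]
      exact hval
    · have e0 : jd + (j - jd) = j := by
        rw [add_comm jd (j - jd)]; exact sub_add_cancel j jd
      have hval : dbSrc (B.f (j - jd)) = u := by
        show dbSrc (d.f (jd + (j - jd))) = u
        rw [congrArg d.f e0]; exact hj
      have hjb : ((j - jd) : Fin (d.n+1)).1 < d.n + 1 := ((j - jd) : Fin (d.n+1)).isLt
      have hnle : ¬ (((j - jd) : Fin (d.n+1)).1 + (A.n+1) ≤ A.n) := by omega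
      refine ⟨⟨((j - jd) : Fin (d.n+1)).1 + (A.n+1),
        by show ((j - jd) : Fin (d.n+1)).1 + (A.n+1) < A.n + 1 + B.n + 1; omega⟩, ?_⟩
      show dbSrc (spliceF A B ⟨((j - jd) : Fin (d.n+1)).1 + (A.n+1),
        by show ((j - jd) : Fin (d.n+1)).1 + (A.n+1) < A.n + 1 + B.n + 1; omega⟩) = u
      rw [spliceF_high A B hnle]
      have e : (⟨((j - jd) : Fin (d.n+1)).1 + (A.n+1) - (A.n+1), by omega⟩ : Fin (B.n+1))
          = j - jd := by
        apply Fin.ext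
        show ((j - jd) : Fin (d.n+1)).1 + (A.n+1) - (A.n+1) = ((j - jd) : Fin (d.n+1)).1
        omega
      rw [e]
      exact hval

def Bal {q ℓ : ℕ} (y : Wd q ℓ → ℕ) : Prop :=
  ∀ v : Wd q (ℓ - 1),
    ∑ w ∈ Finset.univ.filter (fun w : Wd q ℓ => dbDst w = v), y w =
      ∑ w ∈ Finset.univ.filter (fun w : Wd q ℓ => dbSrc w = v), y w

lemma extract {q ℓ : ℕ} (y : Wd q ℓ → ℕ) (hbal : Bal y)
    (w₀ : Wd q ℓ) (h0 : 0 < y w₀) :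
    ∃ c : CW q ℓ, (∀ w, c.count w ≤ y w) ∧ (∀ w, 0 < c.count w → 0 < y w) := by
  classical
  have succ : ∀ w : Wd q ℓ, 0 < y w → ∃ w', 0 < y w' ∧ dbSrc w' = dbDst w := by
    intro w hw
    by_contra hc
    push_neg at hc
    have hzero : ∑ w' ∈ Finset.univ.filter (fun w' => dbSrc w' = dbDst w), y w' = 0 := by
      refine Finset.sum_eq_zero fun w' hw' => ?_
      simp only [Finset.mem_filter, Finset.mem_univ, true_and] at hw'
      by_contra hne
      exact absurd hw' (hc w' (Nat.pos_of_ne_zero hne))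
    have hpos : 0 < ∑ w' ∈ Finset.univ.filter (fun w' => dbDst w' = dbDst w), y w' :=
      lt_of_lt_of_le hw (Finset.single_le_sum (fun _ _ => Nat.zero_le _) (by simp))
    rw [hbal (dbDst w), hzero] at hpos
    omega
  have hstep : ∀ s : {w : Wd q ℓ // 0 < y w}, ∃ s' : {w : Wd q ℓ // 0 < y w},
      dbSrc s'.1 = dbDst s.1 := by
    rintro ⟨w, hw⟩
    obtain ⟨w', h1, h2⟩ := succ w hw
    exact ⟨⟨w', h1⟩, h2⟩
  choose g hg using hstep
  set h : ℕ → {w : Wd q ℓ // 0 < y w} := fun t => g^[t] ⟨w₀, h0⟩ with hh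
  have hrep : ∃ b, ∃ a, a < b ∧ h a = h b := by
    obtain ⟨a, b, hne, heq⟩ := Finite.exists_ne_map_eq_of_infinite h
    rcases lt_or_gt_of_ne hne with hl | hl
    exacts [⟨b, a, hl, heq⟩, ⟨a, b, hl, heq.symm⟩]
  obtain ⟨a₀, hab, heq⟩ := Nat.find_spec hrep
  set b₀ := Nat.find hrep with hb₀
  have hdist : ∀ s t, s < t → t < b₀ → h s ≠ h t := by
    intro s t hst htb hst'
    exact Nat.find_min hrep htb ⟨s, hst, hst'⟩
  have hiter : ∀ t, h (t + 1) = g (h t) := by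
    intro t
    show g^[t+1] _ = g (g^[t] _)
    rw [Function.iterate_succ_apply']
  refine ⟨⟨b₀ - a₀ - 1, fun i => (h (a₀ + i.1)).1, ?_⟩, ?_, ?_⟩
  · intro i
    have hiv := fin_add_one_val i
    have hib : i.1 < b₀ - a₀ := by have := i.isLt; omega
    show dbDst (h (a₀ + i.1)).1 = dbSrc (h (a₀ + (i+1).1)).1
    have key : h (a₀ + (i+1).1) = g (h (a₀ + i.1)) := by
      by_cases hcase : i.1 = b₀ - a₀ - 1
      · rw [hiv, if_pos hcase, add_zero]
        have e1 : h b₀ = h ((a₀ + i.1) + 1) := congrArg h (by omega)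
        rw [heq, e1, hiter]
      · rw [hiv, if_neg hcase, ← add_assoc, hiter]
    rw [key, hg]
  · intro w
    by_cases hw : 0 < y w
    · refine le_trans ?_ hw
      show (Finset.univ.filter fun i : Fin (b₀-a₀-1+1) => (h (a₀ + i.1)).1 = w).card ≤ 1
      refine Finset.card_le_one.mpr fun i hi i' hi' => ?_
      simp only [Finset.mem_filter, Finset.mem_univ, true_and] at hi hi'
      have hsub : h (a₀ + i.1) = h (a₀ + i'.1) := Subtype.ext (hi.trans hi'.symm)
      have hib : a₀ + i.1 < b₀ := by have := i.isLt; omega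
      have hib' : a₀ + i'.1 < b₀ := by have := i'.isLt; omega
      by_contra hne
      have hvne : i.1 ≠ i'.1 := fun hv => hne (Fin.ext hv)
      rcases Nat.lt_or_ge i.1 i'.1 with hl | hl
      · exact hdist _ _ (by omega) hib' hsub
      · exact hdist _ _ (by omega : a₀ + i'.1 < a₀ + i.1) hib hsub.symm
    · have : (Finset.univ.filter fun i : Fin (b₀-a₀-1+1) => (h (a₀ + i.1)).1 = w).card = 0 := by
        rw [Finset.card_eq_zero, Finset.filter_eq_empty_iff]
        intro i _
        intro hfi
        exact hw (hfi ▸ (h (a₀ + i.1)).2)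
      show (Finset.univ.filter fun i : Fin (b₀-a₀-1+1) => (h (a₀ + i.1)).1 = w).card ≤ y w
      rw [this]
      exact Nat.zero_le _
  · intro w hpos
    show 0 < y w
    rw [CW.count] at hpos
    obtain ⟨i, hi⟩ := Finset.card_pos.mp hpos
    simp only [Finset.mem_filter, Finset.mem_univ, true_and] at hi
    exact hi ▸ (h (a₀ + i.1)).2

lemma CW.count_self_pos {q ℓ : ℕ} (c : CW q ℓ) : 0 < c.count (c.f 0) := by
  rw [CW.count]
  refine Finset.card_pos.mpr ⟨0, ?_⟩
  simp

lemma decomp {q ℓ : ℕ} :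
    ∀ (N : ℕ) (y : Wd q ℓ → ℕ), (∑ w, y w) = N → Bal y →
      ∃ L : List (CW q ℓ), ∀ w, (L.map (fun c => c.count w)).sum = y w := by
  intro N
  induction N using Nat.strong_induction_on with
  | _ N ih =>
    intro y hsum hbal
    by_cases hz : ∀ w, y w = 0
    · exact ⟨[], fun w => by simp [hz w]⟩
    · push_neg at hz
      obtain ⟨w₀, hw₀⟩ := hz
      obtain ⟨c, hle, hpos⟩ := extract y hbal w₀ (Nat.pos_of_ne_zero hw₀)
      set y' : Wd q ℓ → ℕ := fun w => y w - c.count w with hy'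
      have hbal' : Bal y' := by
        intro v
        have e1 : ∑ w ∈ Finset.univ.filter (fun w : Wd q ℓ => dbDst w = v), y' w =
            (∑ w ∈ Finset.univ.filter (fun w : Wd q ℓ => dbDst w = v), y w) -
            (∑ w ∈ Finset.univ.filter (fun w : Wd q ℓ => dbDst w = v), c.count w) :=
          Finset.sum_tsub_distrib _ (fun w _ => hle w)
        have e2 : ∑ w ∈ Finset.univ.filter (fun w : Wd q ℓ => dbSrc w = v), y' w =
            (∑ w ∈ Finset.univ.filter (fun w : Wd q ℓ => dbSrc w = v), y w) -
            (∑ w ∈ Finset.univ.filter (fun w : Wd q ℓ => dbSrc w = v), c.count w) :=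
          Finset.sum_tsub_distrib _ (fun w _ => hle w)
        rw [e1, e2, hbal v, c.balanced v]
      have hlt : (∑ w, y' w) < N := by
        rw [← hsum]
        refine Finset.sum_lt_sum (fun w _ => Nat.sub_le _ _) ⟨c.f 0, Finset.mem_univ _, ?_⟩
        have h1 := c.count_self_pos
        have h2 := hle (c.f 0)
        show y (c.f 0) - c.count (c.f 0) < y (c.f 0)
        omega
      obtain ⟨L, hL⟩ := ih _ hlt y' rfl hbal'
      refine ⟨c :: L, fun w => ?_⟩
      have := hL w
      simp only [List.map_cons, List.sum_cons, this]
      show c.count w + (y w - c.count w) = y w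
      have := hle w
      omega

def dbStep {q ℓ : ℕ} (a b : Wd q (ℓ-1)) : Prop :=
  ∃ w : Wd q ℓ, dbSrc w = a ∧ dbDst w = b

lemma dbReach {q ℓ : ℕ} (hℓ : 2 ≤ ℓ) (u v : Wd q (ℓ-1)) :
    Relation.ReflTransGen (dbStep (q := q) (ℓ := ℓ)) u v := by
  have hl1 : 1 ≤ ℓ - 1 := by omega
  set mid : ℕ → Wd q (ℓ-1) := fun k i =>
    if i.1 + k < ℓ-1 then u ⟨(i.1 + k) % (ℓ-1), Nat.mod_lt _ (by omega)⟩
    else v ⟨(i.1 + k - (ℓ-1)) % (ℓ-1), Nat.mod_lt _ (by omega)⟩ with hmid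
  have claim : ∀ k, k ≤ ℓ-1 → Relation.ReflTransGen (dbStep (q := q) (ℓ := ℓ)) u (mid k) := by
    intro k
    induction k with
    | zero =>
      intro _
      have hmz : mid 0 = u := by
        funext i
        rw [hmid]
        simp only
        rw [if_pos (show i.1 + 0 < ℓ-1 by have := i.isLt; omega)]
        refine congrArg u (Fin.ext ?_)
        show (i.1 + 0) % (ℓ-1) = i.1
        rw [Nat.add_zero]
        exact Nat.mod_eq_of_lt i.isLt
      rw [hmz]
    | succ k ihk =>
      intro hk
      refine Relation.ReflTransGen.tail (ihk (by omega)) ?_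
      refine ⟨fun j =>
        if j.1 + k < ℓ-1 then u ⟨(j.1 + k) % (ℓ-1), Nat.mod_lt _ (by omega)⟩
        else v ⟨(j.1 + k - (ℓ-1)) % (ℓ-1), Nat.mod_lt _ (by omega)⟩, ?_, ?_⟩
      · funext i
        show (if i.1 + k < ℓ-1 then _ else _) = mid k i
        rw [hmid]
      · funext i
        show (if i.1 + 1 + k < ℓ-1 then
            u ⟨(i.1 + 1 + k) % (ℓ-1), Nat.mod_lt _ (by omega)⟩
          else v ⟨(i.1 + 1 + k - (ℓ-1)) % (ℓ-1), Nat.mod_lt _ (by omega)⟩) = mid (k+1) i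
        rw [hmid]
        simp only
        by_cases hc : i.1 + 1 + k < ℓ-1
        · rw [if_pos hc, if_pos (show i.1 + (k+1) < ℓ-1 by omega)]
          refine congrArg u (Fin.ext ?_)
          show (i.1+1+k) % (ℓ-1) = (i.1+(k+1)) % (ℓ-1)
          congr 1
          omega
        · rw [if_neg hc, if_neg (show ¬ i.1 + (k+1) < ℓ-1 by omega)]
          refine congrArg v (Fin.ext ?_)
          show (i.1+1+k-(ℓ-1)) % (ℓ-1) = (i.1+(k+1)-(ℓ-1)) % (ℓ-1)
          congr 1
          omega
  have hfin : mid (ℓ-1) = v := by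
    funext i
    rw [hmid]
    simp only
    rw [if_neg (show ¬ i.1 + (ℓ-1) < ℓ-1 by omega)]
    refine congrArg v (Fin.ext ?_)
    show (i.1 + (ℓ-1) - (ℓ-1)) % (ℓ-1) = i.1
    rw [Nat.add_sub_cancel]
    exact Nat.mod_eq_of_lt i.isLt
  have hend := claim (ℓ-1) le_rfl
  rwa [hfin] at hend

lemma CW.visits_dst {q ℓ : ℕ} (c : CW q ℓ) {w : Wd q ℓ} (i : Fin (c.n+1))
    (hi : c.f i = w) : c.visits (dbDst w) := by
  exact ⟨i + 1, by rw [← c.adj i, hi]⟩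

lemma merge_all {q ℓ : ℕ} (hℓ : 2 ≤ ℓ) (x : Wd q ℓ → ℕ) (hx : ∀ w, 0 < x w) :
    ∀ (N : ℕ) (L : List (CW q ℓ)), L.length = N → L ≠ [] →
      (∀ w, (L.map (fun c => c.count w)).sum = x w) →
      ∃ c : CW q ℓ, ∀ w, c.count w = x w := by
  intro N
  induction N using Nat.strong_induction_on with
  | _ N ih =>
    intro L hlen hne htot
    match L, hne with
    | [c₀], _ =>
        refine ⟨c₀, fun w => ?_⟩
        have := htot w
        simpa using this
    | c₀ :: d₁ :: L'', _ =>
        set L' := d₁ :: L'' with hL'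
        -- find an edge in some piece
        have edge_piece : ∀ w : Wd q ℓ, ∃ c₁ ∈ c₀ :: L', ∃ i, c₁.f i = w := by
          intro w
          have hpos : 0 < ((c₀ :: L').map (fun c => c.count w)).sum := by
            rw [htot w]; exact hx w
          by_contra hc
          push_neg at hc
          have : ((c₀ :: L').map (fun c => c.count w)).sum = 0 := by
            refine List.sum_eq_zero fun t ht => ?_
            simp only [List.mem_map] at ht
            obtain ⟨c₁, hc₁, rfl⟩ := ht
            rw [CW.count, Finset.card_eq_zero, Finset.filter_eq_empty_iff]
            intro i _
            exact hc c₁ hc₁ i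
          omega
        have hshare : ∃ d ∈ L', ∃ v, c₀.visits v ∧ d.visits v := by
          by_contra hP
          push_neg at hP
          have closed : ∀ w : Wd q ℓ, c₀.visits (dbSrc w) → c₀.visits (dbDst w) := by
            intro w hvis
            obtain ⟨c₁, hc₁, i, hfi⟩ := edge_piece w
            rcases List.mem_cons.mp hc₁ with rfl | hmem
            · exact c₁.visits_dst i hfi
            · exact absurd ⟨i, congrArg dbSrc hfi⟩ (hP c₁ hmem (dbSrc w) hvis)
          have hvisAll : ∀ v, c₀.visits v := by
            intro v
            have hreach := dbReach (q := q) hℓ (dbSrc (c₀.f 0)) v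
            induction hreach with
            | refl => exact ⟨0, rfl⟩
            | tail hr hstep ihr =>
                obtain ⟨w, hsrc, hdst⟩ := hstep
                exact hdst ▸ closed w (hsrc ▸ ihr)
          exact hP d₁ (by simp [hL']) (dbSrc (d₁.f 0)) (hvisAll _) ⟨0, rfl⟩
        obtain ⟨d, hd, v, hcv, hdv⟩ := hshare
        obtain ⟨e, hecount, hevis⟩ := CW.merge c₀ d v hcv hdv
        obtain ⟨l₁, l₂, hsplit⟩ := List.append_of_mem hd
        have hperm : List.Perm (l₁ ++ d :: l₂) (d :: (l₁ ++ l₂)) := List.perm_middle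
        refine ih (e :: (l₁ ++ l₂)).length ?_ (e :: (l₁ ++ l₂)) rfl (by simp) ?_
        · have h2 : (c₀ :: L').length = N := hlen
          have h5 := congrArg List.length hsplit
          simp at h2 h5 ⊢
          omega
        · intro w
          have h3 := htot w
          rw [hsplit] at h3
          have h4 : ((l₁ ++ d :: l₂).map (fun c => c.count w)).sum
              = ((d :: (l₁ ++ l₂)).map (fun c => c.count w)).sum :=
            (hperm.map (fun c => c.count w)).sum_eq
          simp only [List.map_cons, List.sum_cons, List.map_append, List.sum_append] at h3 h4 ⊢
          rw [hecount w]
          omega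

/-- a positive vector `x : Σ^ℓ → ℕ` is feasible iff the De Bruijn graph
`G_{q,ℓ-1}` with edge weights `x` is balanced. -/
theorem stmt_0 (q ℓ : ℕ) (hq : 2 ≤ q) (hℓ : 2 ≤ ℓ)
    (x : Wd q ℓ → ℕ) (hx : ∀ w, 0 < x w) :
    IsFeasibleVec x ↔
      ∀ v : Wd q (ℓ - 1),
        ∑ w ∈ Finset.univ.filter (fun w : Wd q ℓ => dbDst w = v), x w =
          ∑ w ∈ Finset.univ.filter (fun w : Wd q ℓ => dbSrc w = v), x w := by
  have hw₀ : ∃ w₀ : Wd q ℓ, True := ⟨fun _ => ⟨0, by omega⟩, trivial⟩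
  obtain ⟨w₀, -⟩ := hw₀
  constructor
  · rintro ⟨n, s, hs⟩ v
    match n, s, hs with
    | 0, s, hs =>
        exfalso
        have h1 := hs w₀
        rw [cyclicOcc] at h1
        simp at h1
        have h2 := hx w₀
        omega
    | (m+1), s, hs =>
        obtain ⟨c, hcs⟩ := string_to_CW (ℓ := ℓ) hℓ s
        calc ∑ w ∈ Finset.univ.filter (fun w : Wd q ℓ => dbDst w = v), x w
            = ∑ w ∈ Finset.univ.filter (fun w : Wd q ℓ => dbDst w = v), c.count w :=
              Finset.sum_congr rfl (fun w _ => (hs w).trans (hcs w))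
          _ = ∑ w ∈ Finset.univ.filter (fun w : Wd q ℓ => dbSrc w = v), c.count w :=
              c.balanced v
          _ = ∑ w ∈ Finset.univ.filter (fun w : Wd q ℓ => dbSrc w = v), x w :=
              Finset.sum_congr rfl (fun w _ => ((hs w).trans (hcs w)).symm)
  · intro hbal
    obtain ⟨L, hL⟩ := decomp (∑ w, x w) x rfl hbal
    have hne : L ≠ [] := by
      intro h
      have h1 := hL w₀
      rw [h] at h1
      simp at h1
      have h2 := hx w₀
      omega
    obtain ⟨c, hc⟩ := merge_all hℓ x hx L.length L rfl hne hL
    obtain ⟨n, s, hcyc⟩ := CW.toString hℓ c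
    exact ⟨n, s, fun w => ((hcyc w).trans (hc w)).symm⟩
end

section
/- Let q ≥ 3 and ℓ ≥ 2 be integers and let G_{q,ℓ-1} be the De Bruijn graph over an alphabet Σ of size q. Then every Hamiltonian cycle in G_{q,ℓ-1} can be extended to an Eulerian cycle; that is, there exists a closed directed walk traversing every edge of G_{q,ℓ-1} exactly once whose first q^{ℓ-1} edges are exactly the edges of the given Hamiltonian cycle, in order. -/
set_option linter.unusedSectionVars false
set_option maxHeartbeats 1000000


open Finset

/-- cyclic successor index -/
def nextIdx {m : ℕ} (i : Fin m) : Fin m := ⟨(i.1 + 1) % m, Nat.mod_lt _ i.pos⟩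



open Finset

section Euler

variable {E V : Type*} [DecidableEq E] [DecidableEq V] (src dst : E → V)

def IsTrail : V → List E → V → Prop
  | a, [], b => a = b
  | a, e :: L, b => src e = a ∧ IsTrail (dst e) L b

@[simp] theorem isTrail_nil {a b : V} : IsTrail src dst a [] b ↔ a = b := Iff.rfl

@[simp] theorem isTrail_cons {a b : V} {e : E} {L : List E} :
    IsTrail src dst a (e :: L) b ↔ src e = a ∧ IsTrail src dst (dst e) L b := Iff.rfl

theorem trail_append {a b c : V} {L M : List E} (h1 : IsTrail src dst a L b)
    (h2 : IsTrail src dst b M c) : IsTrail src dst a (L ++ M) c := by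
  induction L generalizing a with
  | nil => rw [isTrail_nil] at h1; subst h1; simpa using h2
  | cons e L ih => exact ⟨h1.1, ih h1.2⟩

theorem trail_eq {a b c : V} {L : List E} (h1 : IsTrail src dst a L b)
    (h2 : IsTrail src dst a L c) : b = c := by
  induction L generalizing a with
  | nil => rw [isTrail_nil] at h1 h2; exact h1 ▸ h2
  | cons e L ih => exact ih h1.2 h2.2

theorem trail_split {a c : V} {L M : List E} (h1 : IsTrail src dst a (L ++ M) c) :
    ∃ b, IsTrail src dst a L b ∧ IsTrail src dst b M c := by
  induction L generalizing a with
  | nil => exact ⟨a, rfl, by simpa using h1⟩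
  | cons e L ih =>
    obtain ⟨b, hb1, hb2⟩ := ih h1.2
    exact ⟨b, ⟨h1.1, hb1⟩, hb2⟩

theorem trail_decomp {a c : V} {L : List E} {e : E} (he : e ∈ L)
    (h1 : IsTrail src dst a L c) :
    ∃ L1 L2, L = L1 ++ e :: L2 ∧ IsTrail src dst a (L1 ++ [e]) (dst e) := by
  obtain ⟨L1, L2, rfl⟩ := List.append_of_mem he
  obtain ⟨b, hb1, hb2⟩ := trail_split src dst h1
  exact ⟨L1, L2, rfl, trail_append src dst hb1 ⟨hb2.1, rfl⟩⟩

def outC (F : Finset E) (w : V) : ℕ := (F.filter (fun e => src e = w)).card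
def inC (F : Finset E) (w : V) : ℕ := (F.filter (fun e => dst e = w)).card
def outL (L : List E) (w : V) : ℕ := L.countP (fun e => decide (src e = w))
def inL (L : List E) (w : V) : ℕ := L.countP (fun e => decide (dst e = w))

theorem trail_balance {a b : V} {L : List E} (h1 : IsTrail src dst a L b) (w : V) :
    outL src L w + (if b = w then 1 else 0) = inL dst L w + (if a = w then 1 else 0) := by
  induction L generalizing a with
  | nil => rw [isTrail_nil] at h1; subst h1; rfl
  | cons e L ih =>
    have h2 := ih h1.2
    obtain rfl := h1.1
    simp only [outL, inL, List.countP_cons, decide_eq_true_eq] at *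
    split_ifs at h2 ⊢ <;> omega

theorem outL_eq_outC {L : List E} (hnd : L.Nodup) (w : V) :
    outL src L w = outC src L.toFinset w := by
  rw [outL, outC, List.countP_eq_length_filter, ← List.Nodup.dedup (hnd.filter _),
    ← List.card_toFinset, List.toFinset_filter]
  congr 1
  simp only [decide_eq_true_eq]

theorem outC_sdiff {F : Finset E} {L : List E} (hnd : L.Nodup) (hsub : ∀ e ∈ L, e ∈ F) (w : V) :
    outC src (F \ L.toFinset) w = outC src F w - outL src L w ∧ outL src L w ≤ outC src F w := by
  rw [outL_eq_outC src hnd]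
  have hsub2 : L.toFinset.filter (fun e => src e = w) ⊆ F.filter (fun e => src e = w) := by
    intro e he; simp only [mem_filter, List.mem_toFinset] at *
    exact ⟨hsub e he.1, he.2⟩
  constructor
  · rw [outC, outC, outC]
    rw [show (F \ L.toFinset).filter (fun e => src e = w)
        = F.filter (fun e => src e = w) \ L.toFinset.filter (fun e => src e = w) by
      ext e; simp [mem_filter, mem_sdiff]; tauto]
    exact card_sdiff_of_subset hsub2
  · exact card_le_card hsub2

theorem inL_eq_inC {L : List E} (hnd : L.Nodup) (w : V) :
    inL dst L w = inC dst L.toFinset w := outL_eq_outC dst hnd w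

theorem inC_sdiff {F : Finset E} {L : List E} (hnd : L.Nodup) (hsub : ∀ e ∈ L, e ∈ F) (w : V) :
    inC dst (F \ L.toFinset) w = inC dst F w - inL dst L w ∧ inL dst L w ≤ inC dst F w :=
  outC_sdiff dst hnd hsub w


theorem exists_unused_out (U : Finset E) (hbal : ∀ w, outC src U w = inC dst U w)
    {L : List E} {u w : V} (hnd : L.Nodup) (ht : IsTrail src dst u L w)
    (hsub : ∀ e ∈ L, e ∈ U) (hne : L ≠ [] → w ≠ u)
    (hstart : L ≠ [] ∨ ∃ e ∈ U, src e = u) :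
    ∃ e ∈ U, e ∉ L ∧ src e = w := by
  rcases List.eq_nil_or_concat L with rfl | hL
  · rw [isTrail_nil] at ht
    subst ht
    obtain ⟨e, heU, hes⟩ := hstart.resolve_left (by simp)
    exact ⟨e, heU, by simp, hes⟩
  · have hLne : L ≠ [] := by rcases hL with ⟨a, b, rfl⟩; simp
    have hwu : w ≠ u := hne hLne
    have hb := trail_balance src dst ht w
    rw [if_pos rfl, if_neg (Ne.symm hwu)] at hb
    have h1 : inL dst L w ≤ inC dst U w := (inC_sdiff dst hnd hsub w).2
    have h2 : outL src L w = outC src L.toFinset w := outL_eq_outC src hnd w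
    have h3 : outC src L.toFinset w < outC src U w := by
      rw [hbal w]; omega
    by_contra hcon
    push_neg at hcon
    have h4 : U.filter (fun e => src e = w) ⊆ L.toFinset.filter (fun e => src e = w) := by
      intro e he
      rw [Finset.mem_filter] at he ⊢
      refine ⟨List.mem_toFinset.mpr ?_, he.2⟩
      by_contra heL
      exact hcon e he.1 heL he.2
    have := Finset.card_le_card h4
    rw [outC, outC] at h3
    omega

theorem extend_trail (U : Finset E) (hbal : ∀ w, outC src U w = inC dst U w) :
    ∀ (k : ℕ) (L : List E) (u w : V), L.Nodup → IsTrail src dst u L w →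
      (∀ e ∈ L, e ∈ U) → U.card - L.length ≤ k →
      (L ≠ [] ∨ ∃ e ∈ U, src e = u) →
      ∃ M, (L ++ M).Nodup ∧ IsTrail src dst u (L ++ M) u ∧ (∀ e ∈ M, e ∈ U) ∧ L ++ M ≠ [] := by
  intro k
  induction k with
  | zero =>
    intro L u w hnd ht hsub hcard hstart
    by_cases hdone : w = u ∧ L ≠ []
    · exact ⟨[], by simpa using hnd, by simpa [hdone.1] using ht, by simp, by simpa using hdone.2⟩
    · have hne : L ≠ [] → w ≠ u := by tauto
      obtain ⟨e, heU, heL, -⟩ := exists_unused_out src dst U hbal hnd ht hsub hne hstart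
      exfalso
      have h1 : L.toFinset ⊂ U :=
        (Finset.ssubset_iff_of_subset (fun f hf => hsub f (List.mem_toFinset.mp hf))).mpr
          ⟨e, heU, fun h => heL (List.mem_toFinset.mp h)⟩
      have h2 := Finset.card_lt_card h1
      rw [List.toFinset_card_of_nodup hnd] at h2
      omega
  | succ k ih =>
    intro L u w hnd ht hsub hcard hstart
    by_cases hdone : w = u ∧ L ≠ []
    · exact ⟨[], by simpa using hnd, by simpa [hdone.1] using ht, by simp, by simpa using hdone.2⟩
    · have hne : L ≠ [] → w ≠ u := by tauto
      obtain ⟨e, heU, heL, hes⟩ := exists_unused_out src dst U hbal hnd ht hsub hne hstart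
      have hnd' : (L ++ [e]).Nodup := by
        rw [List.nodup_append]
        exact ⟨hnd, List.nodup_singleton e, by intro a ha b hb hab; simp at hb; subst hb; exact heL (hab ▸ ha)⟩
      have ht' : IsTrail src dst u (L ++ [e]) (dst e) :=
        trail_append src dst ht ⟨hes, rfl⟩
      have hsub' : ∀ f ∈ L ++ [e], f ∈ U := by
        intro f hf
        rcases List.mem_append.mp hf with h | h
        · exact hsub f h
        · rw [List.mem_singleton] at h; exact h ▸ heU
      have hlen : L.length < U.card := by
        have h1 : L.toFinset ⊂ U :=
          (Finset.ssubset_iff_of_subset (fun f hf => hsub f (List.mem_toFinset.mp hf))).mpr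
            ⟨e, heU, fun h => heL (List.mem_toFinset.mp h)⟩
        have h2 := Finset.card_lt_card h1
        rwa [List.toFinset_card_of_nodup hnd] at h2
      obtain ⟨M, hnd2, ht2, hsub2, hne2⟩ := ih (L ++ [e]) u (dst e) hnd' ht' hsub'
        (by simp only [List.length_append, List.length_singleton]; omega)
        (Or.inl (by simp))
      refine ⟨e :: M, ?_, ?_, ?_, ?_⟩
      · simpa [List.append_assoc] using hnd2
      · simpa [List.append_assoc] using ht2
      · intro f hf
        rcases List.mem_cons.mp hf with rfl | h
        · exact heU
        · exact hsub2 f h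
      · simp

def Step (F : Finset E) (x y : V) : Prop := ∃ e ∈ F, src e = x ∧ dst e = y

theorem trail_reach {F : Finset E} {a b : V} {L : List E} (ht : IsTrail src dst a L b)
    (hsub : ∀ e ∈ L, e ∈ F) : Relation.ReflTransGen (Step src dst F) a b := by
  induction L generalizing a with
  | nil => rw [isTrail_nil] at ht; exact ht ▸ Relation.ReflTransGen.refl
  | cons e L ih =>
    exact Relation.ReflTransGen.head ⟨e, hsub e List.mem_cons_self, ht.1, rfl⟩
      (ih ht.2 (fun f hf => hsub f (List.mem_cons_of_mem e hf)))

theorem rtg_symm {α : Type*} {r : α → α → Prop} (h : ∀ a b, r a b → Relation.ReflTransGen r b a)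
    {a b : α} (hab : Relation.ReflTransGen r a b) : Relation.ReflTransGen r b a := by
  induction hab with
  | refl => exact Relation.ReflTransGen.refl
  | tail _ hbc ih => exact (h _ _ hbc).trans ih

theorem step_rev (F : Finset E) (hbal : ∀ w, outC src F w = inC dst F w) {x y : V}
    (hs : Step src dst F x y) : Relation.ReflTransGen (Step src dst F) y x := by
  obtain ⟨e, heF, hex, hey⟩ := hs
  obtain ⟨M, hnd, ht, hsub, -⟩ := extend_trail src dst F hbal F.card [e] x (dst e)
    (List.nodup_singleton e) ⟨hex, rfl⟩ (by simpa using heF) (by omega) (Or.inl (by simp))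
  obtain ⟨c, h1, h2⟩ := trail_split src dst (L := [e]) (M := M) ht
  have hc : c = dst e := (h1.2 : dst e = c).symm
  subst hc
  rw [hey] at h2
  exact trail_reach src dst h2 hsub

theorem find_splice (F : Finset E) (v0 : V) (T : List E) (hT : IsTrail src dst v0 T v0)
    {x : V} (hx : Relation.ReflTransGen (Step src dst F) v0 x) :
    (∃ T1 T2, T = T1 ++ T2 ∧ IsTrail src dst v0 T1 x) ∨
    (∃ u T1 T2, T = T1 ++ T2 ∧ IsTrail src dst v0 T1 u ∧ ∃ f ∈ F, f ∉ T ∧ src f = u) := by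
  induction hx with
  | refl => exact Or.inl ⟨[], T, rfl, rfl⟩
  | @tail b c hab hbc ih =>
    obtain ⟨g, hgF, hgs, hgd⟩ := hbc
    by_cases hgT : g ∈ T
    · obtain ⟨L1, L2, hdec, htr⟩ := trail_decomp src dst hgT hT
      exact Or.inl ⟨L1 ++ [g], L2, by rw [hdec, List.append_assoc]; rfl, hgd ▸ htr⟩
    · rcases ih with ⟨T1, T2, hdec, htr⟩ | h
      · exact Or.inr ⟨b, T1, T2, hdec, htr, g, hgF, hgT, hgs⟩
      · exact Or.inr h

theorem euler_extend (F : Finset E) (hbal : ∀ w, outC src F w = inC dst F w) (v0 : V)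
    (hconn : ∀ x, Relation.ReflTransGen (Step src dst F) v0 x) :
    ∀ (k : ℕ) (T : List E), T.Nodup → IsTrail src dst v0 T v0 → (∀ e ∈ T, e ∈ F) →
      F.card - T.length ≤ k →
      ∃ T', T'.Nodup ∧ IsTrail src dst v0 T' v0 ∧ T'.length = F.card ∧ ∀ e ∈ T', e ∈ F := by
  intro k
  induction k with
  | zero =>
    intro T hnd ht hsub hcard
    refine ⟨T, hnd, ht, ?_, hsub⟩
    have h1 : T.toFinset ⊆ F := fun f hf => hsub f (List.mem_toFinset.mp hf)
    have h2 := Finset.card_le_card h1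
    rw [List.toFinset_card_of_nodup hnd] at h2
    omega
  | succ k ih =>
    intro T hnd ht hsub hcard
    by_cases hlen : F.card ≤ T.length
    · refine ⟨T, hnd, ht, ?_, hsub⟩
      have h1 : T.toFinset ⊆ F := fun f hf => hsub f (List.mem_toFinset.mp hf)
      have h2 := Finset.card_le_card h1
      rw [List.toFinset_card_of_nodup hnd] at h2
      omega
    · push_neg at hlen
      -- there is an unused edge
      have hTcard : T.toFinset.card < F.card := by
        rwa [List.toFinset_card_of_nodup hnd]
      have hex : ∃ e ∈ F, e ∉ T.toFinset := by
        by_contra hcon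
        push_neg at hcon
        exact absurd (Finset.card_le_card hcon) (by omega)
      obtain ⟨e, heF, heT'⟩ := hex
      have heT : e ∉ T := fun h => heT' (List.mem_toFinset.mpr h)
      -- find splice point
      have hfs := find_splice src dst F v0 T ht (hconn (src e))
      have hsp : ∃ u T1 T2, T = T1 ++ T2 ∧ IsTrail src dst v0 T1 u ∧
          ∃ f ∈ F, f ∉ T ∧ src f = u := by
        rcases hfs with ⟨T1, T2, hdec, htr⟩ | h
        · exact ⟨src e, T1, T2, hdec, htr, e, heF, heT, rfl⟩
        · exact h
      obtain ⟨u, T1, T2, hdec, htr1, f, hfF, hfT, hfs'⟩ := hsp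
      -- balanced remainder
      set U := F \ T.toFinset with hU
      have hbalU : ∀ w, outC src U w = inC dst U w := by
        intro w
        have hb := trail_balance src dst ht w

        have houts := outC_sdiff src hnd hsub w
        have hins := inC_sdiff dst hnd hsub w
        rw [houts.1, hins.1, hbal w]
        have : outL src T w = inL dst T w := by
          by_cases hw : v0 = w <;> simp [hw] at hb <;> omega
        omega
      -- closed trail from u in U
      obtain ⟨M, hndM, htM, hsubM, hneM⟩ := extend_trail src dst U hbalU U.card [] u u
        List.nodup_nil rfl (by simp) (by omega)
        (Or.inr ⟨f, Finset.mem_sdiff.mpr ⟨hfF, fun h => hfT (List.mem_toFinset.mp h)⟩, hfs'⟩)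
      rw [List.nil_append] at hndM htM hneM
      -- splice
      have htr2 : IsTrail src dst u T2 v0 := by
        obtain ⟨b, hb1, hb2⟩ := trail_split src dst (hdec ▸ ht)
        rwa [trail_eq src dst hb1 htr1] at hb2
      have hMnotT : ∀ g ∈ M, g ∉ T := by
        intro g hg hgT
        have := hsubM g hg
        rw [hU, Finset.mem_sdiff] at this
        exact this.2 (List.mem_toFinset.mpr hgT)
      have hndT12 : (T1 ++ T2).Nodup := hdec ▸ hnd
      have hnd'' : (T1 ++ (M ++ T2)).Nodup := by
        rw [List.nodup_append] at hndT12 ⊢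
        refine ⟨hndT12.1, ?_, ?_⟩
        · rw [List.nodup_append]
          refine ⟨hndM, hndT12.2.1, ?_⟩
          intro g hg b hgT2 hgb; subst hgb
          exact hMnotT g hg (hdec ▸ List.mem_append.mpr (Or.inr hgT2))
        · intro g hg b hgMT2 hgb; subst hgb
          rcases List.mem_append.mp hgMT2 with h | h
          · exact hMnotT g h (hdec ▸ List.mem_append.mpr (Or.inl hg))
          · exact hndT12.2.2 g hg g h rfl
      have ht'' : IsTrail src dst v0 (T1 ++ (M ++ T2)) v0 :=
        trail_append src dst htr1 (trail_append src dst htM htr2)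
      have hsub'' : ∀ g ∈ T1 ++ (M ++ T2), g ∈ F := by
        intro g hg
        rcases List.mem_append.mp hg with h | h
        · exact hsub g (hdec ▸ List.mem_append.mpr (Or.inl h))
        rcases List.mem_append.mp h with h | h
        · exact Finset.mem_sdiff.mp (hsubM g h) |>.1
        · exact hsub g (hdec ▸ List.mem_append.mpr (Or.inr h))
      have hlen'' : F.card - (T1 ++ (M ++ T2)).length ≤ k := by
        have hM1 : 1 ≤ M.length := by
          cases M with
          | nil => exact absurd rfl hneM
          | cons a l => simp
        have hTlen : T.length = T1.length + T2.length := by rw [hdec, List.length_append]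
        simp only [List.length_append]
        omega
      exact ih (T1 ++ (M ++ T2)) hnd'' ht'' hsub'' hlen''

theorem trail_head_get {a b : V} {L : List E} (ht : IsTrail src dst a L b)
    (h : 0 < L.length) : src (L[0]'h) = a := by
  cases L with
  | nil => simp at h
  | cons e L => exact ht.1

theorem trail_last_get {a b : V} {L : List E} (ht : IsTrail src dst a L b)
    (h : 0 < L.length) : dst (L[L.length - 1]'(by omega)) = b := by
  induction L generalizing a with
  | nil => simp at h
  | cons e L ih =>
    cases L with
    | nil => exact ht.2
    | cons f L' =>
      have := ih ht.2 (by simp)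
      simpa using this

theorem trail_getElem {a b : V} {L : List E} (ht : IsTrail src dst a L b) :
    ∀ i : ℕ, (h2 : i + 1 < L.length) → dst (L[i]'(by omega)) = src (L[i+1]'h2) := by
  induction L generalizing a with
  | nil => intro i h2; simp at h2
  | cons e L ih =>
    intro i h2
    cases i with
    | zero =>
      have h0 : 0 < L.length := by simpa using h2
      simpa using (trail_head_get src dst ht.2 h0).symm
    | succ j =>
      have := ih ht.2 j (by simpa using h2)
      simpa using this

theorem ofFn_trail : ∀ (m : ℕ) (f : Fin m → E) (hm : 0 < m),
    (∀ (i : Fin m) (h : i.1 + 1 < m), dst (f i) = src (f ⟨i.1 + 1, h⟩)) →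
    IsTrail src dst (src (f ⟨0, hm⟩)) (List.ofFn f) (dst (f ⟨m - 1, by omega⟩)) := by
  intro m
  induction m with
  | zero => intro f hm; omega
  | succ m ih =>
    intro f hm hc
    rw [List.ofFn_succ]
    refine ⟨rfl, ?_⟩
    rcases Nat.eq_zero_or_pos m with rfl | hm'
    · simpa using rfl
    · have hrec := ih (fun i => f i.succ) hm' (fun i h => by
        have := hc i.succ (by simpa using h)
        simpa using this)
      have h1 : src ((fun i : Fin m => f i.succ) ⟨0, hm'⟩) = dst (f ⟨0, hm⟩) := by
        have := hc ⟨0, hm⟩ (by simp; omega)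
        simpa using this.symm
      have h2 : ((⟨m - 1, by omega⟩ : Fin m).succ) = (⟨m + 1 - 1, by omega⟩ : Fin (m + 1)) := by
        apply Fin.ext
        simp
        omega
      have h3 : (fun i : Fin m => f i.succ) ⟨m - 1, by omega⟩ = f ⟨m + 1 - 1, by omega⟩ := by
        rw [← h2]
      rw [h1, h2] at hrec
      exact hrec

section DB

variable {q ℓ : ℕ}

def dbExt (w : Wd q (ℓ - 1)) (a : Fin q) : Wd q ℓ :=
  fun i => if h : i.1 < ℓ - 1 then w ⟨i.1, h⟩ else a

theorem dbSrc_dbExt (w : Wd q (ℓ - 1)) (a : Fin q) : dbSrc (dbExt w a) = w := by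
  funext i
  simp [dbSrc, dbExt, i.isLt]

theorem dbExt_last (hℓ : 2 ≤ ℓ) (w : Wd q (ℓ - 1)) (a : Fin q) :
    dbExt w a ⟨ℓ - 1, by omega⟩ = a := by
  simp [dbExt]

theorem dbExt_inj (hℓ : 2 ≤ ℓ) (w : Wd q (ℓ - 1)) : Function.Injective (dbExt (ℓ := ℓ) w) := by
  intro a b hab
  have := congrFun hab ⟨ℓ - 1, by omega⟩
  rwa [dbExt_last hℓ, dbExt_last hℓ] at this

theorem eq_dbExt (hℓ : 2 ≤ ℓ) (e : Wd q ℓ) :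
    e = dbExt (dbSrc e) (e ⟨ℓ - 1, by omega⟩) := by
  funext i
  by_cases hi : i.1 < ℓ - 1
  · simp only [dbExt, dif_pos hi, dbSrc]
  · simp only [dbExt, dif_neg hi]
    congr 1
    apply Fin.ext
    have := i.isLt
    simp
    omega

def dbPre (a : Fin q) (w : Wd q (ℓ - 1)) : Wd q ℓ :=
  fun i => if h : i.1 = 0 then a else w ⟨i.1 - 1, by have := i.isLt; omega⟩

theorem dbDst_dbPre (a : Fin q) (w : Wd q (ℓ - 1)) : dbDst (dbPre a w) = w := by
  funext i
  simp only [dbDst, dbPre, dif_neg (Nat.succ_ne_zero i.1)]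
  congr 1

theorem dbPre_zero (hℓ : 2 ≤ ℓ) (a : Fin q) (w : Wd q (ℓ - 1)) :
    dbPre a w ⟨0, by omega⟩ = a := by
  simp [dbPre]

theorem dbPre_inj (hℓ : 2 ≤ ℓ) (w : Wd q (ℓ - 1)) :
    Function.Injective (fun a : Fin q => dbPre (ℓ := ℓ) a w) := by
  intro a b hab
  have hab' : dbPre (ℓ := ℓ) a w = dbPre b w := hab
  have := congrFun hab' ⟨0, by omega⟩
  rwa [dbPre_zero hℓ, dbPre_zero hℓ] at this

theorem eq_dbPre (hℓ : 2 ≤ ℓ) (e : Wd q ℓ) :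
    e = dbPre (e ⟨0, by omega⟩) (dbDst e) := by
  funext i
  by_cases hi : i.1 = 0
  · simp only [dbPre, dif_pos hi]
    congr 1
    apply Fin.ext
    simp [hi]
  · simp only [dbPre, dif_neg hi, dbDst]
    congr 1
    apply Fin.ext
    have := i.isLt
    simp
    omega

theorem out_univ_card (hℓ : 2 ≤ ℓ) (w : Wd q (ℓ - 1)) :
    ((univ : Finset (Wd q ℓ)).filter (fun e => dbSrc e = w)).card = q := by
  classical
  have himg : (univ : Finset (Wd q ℓ)).filter (fun e => dbSrc e = w)
      = (univ : Finset (Fin q)).image (dbExt w) := by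
    ext e
    simp only [mem_filter, mem_univ, true_and, mem_image]
    constructor
    · intro he
      exact ⟨e ⟨ℓ - 1, by omega⟩, by rw [← he, ← eq_dbExt hℓ]⟩
    · rintro ⟨a, rfl⟩
      exact dbSrc_dbExt w a
  rw [himg, Finset.card_image_of_injective _ (dbExt_inj hℓ w), card_univ, Fintype.card_fin]

theorem in_univ_card (hℓ : 2 ≤ ℓ) (w : Wd q (ℓ - 1)) :
    ((univ : Finset (Wd q ℓ)).filter (fun e => dbDst e = w)).card = q := by
  classical
  have himg : (univ : Finset (Wd q ℓ)).filter (fun e => dbDst e = w)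
      = (univ : Finset (Fin q)).image (fun a => dbPre a w) := by
    ext e
    simp only [mem_filter, mem_univ, true_and, mem_image]
    constructor
    · intro he
      exact ⟨e ⟨0, by omega⟩, by rw [← he, ← eq_dbPre hℓ]⟩
    · rintro ⟨a, rfl⟩
      exact dbDst_dbPre a w
  rw [himg, Finset.card_image_of_injective _ (dbPre_inj hℓ w), card_univ, Fintype.card_fin]

end DB

section Ham

variable {q ℓ : ℕ}

theorem exists_avoid (hq : 3 ≤ q) (x y : Fin q) : ∃ a : Fin q, a ≠ x ∧ a ≠ y := by
  by_contra hc
  push_neg at hc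
  have hsub : (univ : Finset (Fin q)) ⊆ {x, y} := by
    intro a _
    simp only [mem_insert, mem_singleton]
    rcases eq_or_ne a x with h | h
    · exact Or.inl h
    · exact Or.inr (hc a h)
  have h1 := Finset.card_le_card hsub
  have h2 : ({x, y} : Finset (Fin q)).card ≤ 2 := by
    apply le_trans (Finset.card_insert_le x {y})
    simp
  rw [card_univ, Fintype.card_fin] at h1
  omega

theorem nextIdx_inj {m : ℕ} : Function.Injective (nextIdx (m := m)) := by
  intro i j hij
  have hi := i.isLt
  have hj := j.isLt
  have h1 : (i.1 + 1) % m = (j.1 + 1) % m := congrArg Fin.val hij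
  rcases Nat.lt_or_ge (i.1 + 1) m with h | h <;> rcases Nat.lt_or_ge (j.1 + 1) m with h' | h'
  · rw [Nat.mod_eq_of_lt h, Nat.mod_eq_of_lt h'] at h1
    exact Fin.ext (by omega)
  · have hjm : j.1 + 1 = m := by omega
    rw [Nat.mod_eq_of_lt h, hjm, Nat.mod_self] at h1
    omega
  · have him : i.1 + 1 = m := by omega
    rw [him, Nat.mod_self, Nat.mod_eq_of_lt h'] at h1
    omega
  · exact Fin.ext (by omega)

variable (h : Fin (q ^ (ℓ - 1)) → Wd q ℓ)

/-- the non-Hamiltonian edges -/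
def dbF0 : Finset (Wd q ℓ) := univ.filter (fun e => ∀ i, e ≠ h i)

theorem mem_dbF0 {e : Wd q ℓ} : e ∈ dbF0 h ↔ ∀ i, e ≠ h i := by
  simp [dbF0]

variable (hcyc : ∀ i, dbDst (h i) = dbSrc (h (nextIdx i)))
  (hham : Function.Bijective fun i => dbSrc (h i))

include hcyc hham in
theorem dbDst_bij : Function.Bijective fun i => dbDst (h i) := by
  have : (fun i => dbDst (h i)) = (fun j => dbSrc (h j)) ∘ nextIdx := by
    funext i
    exact hcyc i
  rw [this]
  exact hham.comp (Finite.injective_iff_bijective.mp nextIdx_inj)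

include hham in
theorem outC_dbF0 (hℓ : 2 ≤ ℓ) (w : Wd q (ℓ - 1)) :
    outC dbSrc (dbF0 h) w = q - 1 := by
  classical
  set σ := Equiv.ofBijective (fun i => dbSrc (h i)) hham with hσ
  set hw : Wd q ℓ := h (σ.symm w) with hhw
  have hsw : dbSrc hw = w := σ.apply_symm_apply w
  have key : (dbF0 h).filter (fun e => dbSrc e = w)
      = (univ.filter (fun e => dbSrc e = w)).erase hw := by
    ext e
    simp only [mem_filter, mem_erase, mem_univ, true_and, mem_dbF0]
    constructor
    · rintro ⟨hall, hsrc⟩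
      exact ⟨hall _, hsrc⟩
    · rintro ⟨hne, hsrc⟩
      refine ⟨fun i hei => ?_, hsrc⟩
      have : σ i = w := by rw [hσ]; simp only [Equiv.ofBijective_apply]; rw [← hei, hsrc]
      have hi : i = σ.symm w := by rw [← this]; simp
      exact hne (by rw [hei, hi])
  rw [outC, key, Finset.card_erase_of_mem (by simp [hsw]), out_univ_card hℓ]

include hcyc hham in
theorem inC_dbF0 (hℓ : 2 ≤ ℓ) (w : Wd q (ℓ - 1)) :
    inC dbDst (dbF0 h) w = q - 1 := by
  classical
  set σ := Equiv.ofBijective (fun i => dbDst (h i)) (dbDst_bij h hcyc hham) with hσ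
  set hw : Wd q ℓ := h (σ.symm w) with hhw
  have hsw : dbDst hw = w := σ.apply_symm_apply w
  have key : (dbF0 h).filter (fun e => dbDst e = w)
      = (univ.filter (fun e => dbDst e = w)).erase hw := by
    ext e
    simp only [mem_filter, mem_erase, mem_univ, true_and, mem_dbF0]
    constructor
    · rintro ⟨hall, hsrc⟩
      exact ⟨hall _, hsrc⟩
    · rintro ⟨hne, hsrc⟩
      refine ⟨fun i hei => ?_, hsrc⟩
      have : σ i = w := by rw [hσ]; simp only [Equiv.ofBijective_apply]; rw [← hei, hsrc]
      have hi : i = σ.symm w := by rw [← this]; simp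
      exact hne (by rw [hei, hi])
  rw [inC, key, Finset.card_erase_of_mem (by simp [hsw]), in_univ_card hℓ]

include hcyc hham in
theorem dbF0_balance (hℓ : 2 ≤ ℓ) (w : Wd q (ℓ - 1)) :
    outC dbSrc (dbF0 h) w = inC dbDst (dbF0 h) w := by
  rw [outC_dbF0 h hham hℓ, inC_dbF0 h hcyc hham hℓ]

/-- last symbol of the unique Hamiltonian edge leaving `w` -/
noncomputable def forbLast (hℓ : 2 ≤ ℓ) (w : Wd q (ℓ - 1)) : Fin q :=
  h ((Equiv.ofBijective (fun i => dbSrc (h i)) hham).symm w) ⟨ℓ - 1, by omega⟩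

include hham in
theorem mem_dbF0_ext (hℓ : 2 ≤ ℓ) {w : Wd q (ℓ - 1)} {a : Fin q}
    (ha : a ≠ forbLast h hham hℓ w) : dbExt w a ∈ dbF0 h := by
  rw [mem_dbF0]
  intro i hei
  set σ := Equiv.ofBijective (fun i => dbSrc (h i)) hham with hσ
  have hsw : dbSrc (h i) = w := by rw [← hei, dbSrc_dbExt]
  have : σ i = w := hsw
  have hi : i = σ.symm w := by rw [← this]; simp
  apply ha
  rw [forbLast, ← hi, ← hei, dbExt_last hℓ]

include hham in
theorem db_step (hℓ : 2 ≤ ℓ) {w : Wd q (ℓ - 1)} {a : Fin q}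
    (ha : a ≠ forbLast h hham hℓ w) :
    Step dbSrc dbDst (dbF0 h) w (dbDst (dbExt w a)) :=
  ⟨dbExt w a, mem_dbF0_ext h hham hℓ ha, dbSrc_dbExt w a, rfl⟩

include hham in
theorem db_merge (hq : 3 ≤ q) (hℓ : 2 ≤ ℓ) :
    ∀ (t : ℕ) (u v : Wd q (ℓ - 1)), (∀ i : Fin (ℓ - 1), t ≤ i.1 → u i = v i) →
    ∃ w, Relation.ReflTransGen (Step dbSrc dbDst (dbF0 h)) u w ∧
         Relation.ReflTransGen (Step dbSrc dbDst (dbF0 h)) v w := by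
  intro t
  induction t with
  | zero =>
    intro u v hagree
    have : u = v := funext fun i => hagree i (Nat.zero_le _)
    exact ⟨v, this ▸ Relation.ReflTransGen.refl, Relation.ReflTransGen.refl⟩
  | succ t ih =>
    intro u v hagree
    obtain ⟨a, hau, hav⟩ := exists_avoid hq (forbLast h hham hℓ u) (forbLast h hham hℓ v)
    set u' := dbDst (dbExt u a) with hu'
    set v' := dbDst (dbExt v a) with hv'
    have hagree' : ∀ i : Fin (ℓ - 1), t ≤ i.1 → u' i = v' i := by
      intro i hi
      rw [hu', hv']
      simp only [dbDst, dbExt]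
      by_cases hlt : i.1 + 1 < ℓ - 1
      · rw [dif_pos hlt, dif_pos hlt]
        exact hagree ⟨i.1 + 1, hlt⟩ (by simp; omega)
      · rw [dif_neg hlt, dif_neg hlt]
    obtain ⟨w, hw1, hw2⟩ := ih u' v' hagree'
    exact ⟨w, Relation.ReflTransGen.head (db_step h hham hℓ hau) hw1,
      Relation.ReflTransGen.head (db_step h hham hℓ hav) hw2⟩

include hcyc hham in
theorem db_conn (hq : 3 ≤ q) (hℓ : 2 ≤ ℓ) (x y : Wd q (ℓ - 1)) :
    Relation.ReflTransGen (Step dbSrc dbDst (dbF0 h)) x y := by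
  obtain ⟨w, h1, h2⟩ := db_merge h hham hq hℓ (ℓ - 1) x y
    (fun i hi => absurd i.isLt (by omega))
  refine h1.trans (rtg_symm ?_ h2)
  intro a b hab
  exact step_rev dbSrc dbDst (dbF0 h) (dbF0_balance h hcyc hham hℓ) hab

theorem dbF0_card (hℓ : 2 ≤ ℓ) (hinj : Function.Injective h) :
    (dbF0 h).card + q ^ (ℓ - 1) = q ^ ℓ := by
  classical
  have h1 := Finset.card_filter_add_card_filter_not
    (s := (univ : Finset (Wd q ℓ))) (p := fun e => ∀ i, e ≠ h i)
  have h2 : univ.filter (fun e => ¬ ∀ i, e ≠ h i) = univ.image h := by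
    ext e
    simp only [mem_filter, mem_univ, true_and, mem_image]
    push_neg
    constructor
    · rintro ⟨i, rfl⟩; exact ⟨i, rfl⟩
    · rintro ⟨i, rfl⟩; exact ⟨i, rfl⟩
  have h3 : (univ.image h).card = q ^ (ℓ - 1) := by
    rw [Finset.card_image_of_injective _ hinj, card_univ, Fintype.card_fin]
  have h4 : (univ : Finset (Wd q ℓ)).card = q ^ ℓ := by
    rw [card_univ]
    simp [Fintype.card_fun]
  rw [h2, h3, h4] at h1
  rw [← h1, dbF0]

end Ham

theorem getElem_idx_congr {α : Type*} (L : List α) {j k : ℕ} (hj : j < L.length)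
    (hjk : j = k) : L[j]'hj = L[k]'(hjk ▸ hj) := by subst hjk; rfl

/-- every Hamiltonian cycle `h` in the De Bruijn graph `G_{q,ℓ-1}` (`q ≥ 3`,
`ℓ ≥ 2`) extends to an Eulerian cycle: there is a closed walk `τ` traversing every edge
exactly once whose first `q^{ℓ-1}` edges are exactly `h`, in order. -/
theorem stmt_4 (q ℓ : ℕ) (hq : 3 ≤ q) (hℓ : 2 ≤ ℓ)
    (h : Fin (q ^ (ℓ - 1)) → Wd q ℓ)
    (hcyc : ∀ i, dbDst (h i) = dbSrc (h (nextIdx i)))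
    (hham : Function.Bijective fun i => dbSrc (h i)) :
    ∃ τ : Fin (q ^ ℓ) → Wd q ℓ,
      Function.Bijective τ ∧
      (∀ i, dbDst (τ i) = dbSrc (τ (nextIdx i))) ∧
      ∀ i : Fin (q ^ (ℓ - 1)),
        τ ⟨i.1, by
            have h1 := i.isLt
            have h2 : q ^ (ℓ - 1) ≤ q ^ ℓ := Nat.pow_le_pow_right (by omega) (by omega)
            omega⟩ = h i := by
  classical
  have hm0 : 0 < q ^ (ℓ - 1) := pow_pos (by omega) _
  have hq0 : 0 < q ^ ℓ := pow_pos (by omega) _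
  have hinj : Function.Injective h := by
    intro i j hij
    apply hham.1
    simp only
    rw [hij]
  set v0 := dbSrc (h ⟨0, hm0⟩) with hv0
  have hcH : ∀ (i : Fin (q ^ (ℓ - 1))) (hlt : i.1 + 1 < q ^ (ℓ - 1)),
      dbDst (h i) = dbSrc (h ⟨i.1 + 1, hlt⟩) := by
    intro i hlt
    rw [hcyc i]
    have hni : nextIdx i = (⟨i.1 + 1, hlt⟩ : Fin (q ^ (ℓ - 1))) := by
      apply Fin.ext
      simpa [nextIdx] using Nat.mod_eq_of_lt hlt
    rw [hni]
  have htrailH0 := ofFn_trail dbSrc dbDst (q ^ (ℓ - 1)) h hm0 hcH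
  have hend : dbDst (h ⟨q ^ (ℓ - 1) - 1, by omega⟩) = v0 := by
    rw [hcyc ⟨q ^ (ℓ - 1) - 1, by omega⟩, hv0]
    have hni : nextIdx (⟨q ^ (ℓ - 1) - 1, by omega⟩ : Fin (q ^ (ℓ - 1))) = ⟨0, hm0⟩ := by
      apply Fin.ext
      simp only [nextIdx]
      rw [Nat.sub_add_cancel (by omega)]
      exact Nat.mod_self _
    rw [hni]
  have htrailH : IsTrail dbSrc dbDst v0 (List.ofFn h) v0 := by
    have h0 := htrailH0
    rw [hend] at h0
    exact h0
  have hbal := fun w => dbF0_balance h hcyc hham hℓ w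
  have hconn := fun x => db_conn h hcyc hham hq hℓ v0 x
  obtain ⟨T', hndT, htT, hlenT, hsubT⟩ := euler_extend dbSrc dbDst (dbF0 h) hbal v0 hconn
    (dbF0 h).card [] List.nodup_nil rfl (by simp) (by simp)
  set Full := List.ofFn h ++ T' with hFull
  have hlenH : (List.ofFn h).length = q ^ (ℓ - 1) := List.length_ofFn
  have hlenFull : Full.length = q ^ ℓ := by
    rw [hFull, List.length_append, hlenH, hlenT]
    have := dbF0_card h hℓ hinj
    omega
  have hndFull : Full.Nodup := by
    rw [hFull, List.nodup_append]
    refine ⟨List.nodup_ofFn.mpr hinj, hndT, ?_⟩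
    intro e heH b heT heb; subst heb
    rw [List.mem_ofFn] at heH
    obtain ⟨i, rfl⟩ := heH
    exact ((mem_dbF0 h).mp (hsubT _ heT)) i rfl
  have htFull : IsTrail dbSrc dbDst v0 Full v0 := trail_append _ _ htrailH htT
  refine ⟨fun i => Full[i.1]'(by rw [hlenFull]; exact i.isLt), ?_, ?_, ?_⟩
  · rw [Fintype.bijective_iff_injective_and_card]
    constructor
    · intro i j hij
      exact Fin.ext ((List.Nodup.getElem_inj_iff hndFull).mp hij)
    · simp [Fintype.card_fun]
  · intro i
    by_cases hi : i.1 + 1 < q ^ ℓ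
    · have hnext : (nextIdx i).1 = i.1 + 1 := by
        simpa [nextIdx] using Nat.mod_eq_of_lt hi
      have hstep := trail_getElem dbSrc dbDst htFull i.1 (by rw [hlenFull]; exact hi)
      simp only []
      rw [getElem_idx_congr Full (by rw [hlenFull]; exact (nextIdx i).isLt) hnext]
      exact hstep
    · have hieq : i.1 + 1 = q ^ ℓ := by have := i.isLt; omega
      have hnext : (nextIdx i).1 = 0 := by
        simp only [nextIdx]
        rw [hieq]
        exact Nat.mod_self _
      have h1 := trail_last_get dbSrc dbDst htFull (by rw [hlenFull]; omega)
      have h2 := trail_head_get dbSrc dbDst htFull (by rw [hlenFull]; omega)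
      simp only []
      rw [getElem_idx_congr Full (by rw [hlenFull]; exact i.isLt)
          (show i.1 = Full.length - 1 by rw [hlenFull]; omega),
        getElem_idx_congr Full (by rw [hlenFull]; exact (nextIdx i).isLt) hnext]
      rw [h1, h2]
  · intro i
    have hi : i.1 < (List.ofFn h).length := by rw [hlenH]; exact i.isLt
    simp only [hFull]
    rw [List.getElem_append_left hi]
    simp [List.getElem_ofFn]
end Euler
end

section
/- Fix an integer ℓ ≥ 2, and for q ≥ 3 let R_{q,ℓ} = log₂ F_{q,ℓ} / log₂((q^ℓ)!), where F_{q,ℓ} is the number of feasible permutations of Σ^ℓ over an alphabet Σ of size q. Then lim_{q→∞} R_{q,ℓ} = 1. -/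
open Finset

/-- A permutation (ranking) of `Σ^ℓ` is feasible if some feasible vector `x` with pairwise
distinct entries ranks the `ℓ`-grams exactly as `π` does. -/
def FeasiblePerm {q ℓ : ℕ} (π : Wd q ℓ ≃ Fin (Fintype.card (Wd q ℓ))) : Prop :=
  ∃ x : Wd q ℓ → ℕ, IsFeasibleVec x ∧ Function.Injective x ∧
    ∀ w w' : Wd q ℓ, π w < π w' ↔ x w < x w'

/-- `F_{q,ℓ}`: the number of feasible permutations of `Σ^ℓ`. -/
noncomputable def numFeasible (q ℓ : ℕ) : ℕ :=
  Nat.card {π : Wd q ℓ ≃ Fin (Fintype.card (Wd q ℓ)) // FeasiblePerm π}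

namespace Stmt9

variable {q ℓ : ℕ}

/-- A block: first `2ℓ` letters from `v`, last `ℓ` letters zero. -/
def blk [NeZero q] (ℓ : ℕ) (v : Wd q (2*ℓ)) : Fin (3*ℓ) → Fin q :=
  fun p => if h : (p : ℕ) < 2*ℓ then v ⟨p, h⟩ else 0

lemma blk_apply_ge [NeZero q] (v : Wd q (2*ℓ)) (p : Fin (3*ℓ)) (h : 2*ℓ ≤ (p:ℕ)) :
    blk ℓ v p = 0 := by
  simp [blk, Nat.not_lt.2 h]

def bigStr [NeZero q] (K : ℕ) (hℓ : 0 < ℓ) (W : Fin K → Wd q (2*ℓ)) :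
    Fin (K*(3*ℓ)) → Fin q :=
  fun i => blk ℓ (W ⟨(i:ℕ) / (3*ℓ), Nat.div_lt_of_lt_mul (Nat.mul_comm K (3*ℓ) ▸ i.2)⟩)
    ⟨(i:ℕ) % (3*ℓ), Nat.mod_lt _ (by omega)⟩

lemma bigStr_eval [NeZero q] {K : ℕ} (hℓ : 0 < ℓ) (W : Fin K → Wd q (2*ℓ))
    (t : ℕ) (ht : t < K*(3*ℓ)) (k' o' : ℕ) (hk' : k' < K) (ho' : o' < 3*ℓ)
    (h : t = 3*ℓ*k' + o') :
    bigStr K hℓ W ⟨t, ht⟩ = blk ℓ (W ⟨k', hk'⟩) ⟨o', ho'⟩ := by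
  subst h
  have hd : (3*ℓ*k' + o') / (3*ℓ) = k' := by
    rw [Nat.mul_add_div (by omega), Nat.div_eq_of_lt ho']
    omega
  have hm : (3*ℓ*k' + o') % (3*ℓ) = o' := by
    rw [Nat.mul_add_mod, Nat.mod_eq_of_lt ho']
  unfold bigStr
  simp only
  congr 1
  · exact congrArg W (Fin.ext hd)
  · exact Fin.ext hm

lemma key [NeZero q] {K : ℕ} (hℓ : 0 < ℓ) (W : Fin K → Wd q (2*ℓ))
    (k o : ℕ) (hk : k < K) (ho : o < 3*ℓ) (j : ℕ) (hj : j < ℓ) :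
    bigStr K hℓ W ⟨(3*ℓ*k + o + j) % (K*(3*ℓ)),
        Nat.mod_lt _ (Nat.mul_pos (by omega) (by omega))⟩ =
      blk ℓ (W ⟨if 2*ℓ < o then (k+1) % K else k, by
        split
        · exact Nat.mod_lt _ (by omega)
        · exact hk⟩)
        ⟨(o + j) % (3*ℓ), Nat.mod_lt _ (by omega)⟩ := by
  have hKpos : 0 < K := by omega
  by_cases hcase : o + j < 3*ℓ
  · have h1 : 3*ℓ*k + o + j < K*(3*ℓ) := by
      have h2 : 3*ℓ*(k+1) ≤ 3*ℓ*K := Nat.mul_le_mul_left _ (by omega)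
      nlinarith
    have hoj : (o + j) % (3*ℓ) = o + j := Nat.mod_eq_of_lt hcase
    rw [bigStr_eval hℓ W _ _ k (o+j) hk hcase (by rw [Nat.mod_eq_of_lt h1]; omega)]
    by_cases h2l : 2*ℓ < o
    · rw [blk_apply_ge _ _ (by simp only [Fin.val_mk]; omega)]
      rw [blk_apply_ge _ _ (by simp only [Fin.val_mk]; omega)]
    · simp only [h2l, if_false]
      congr 1
      first
      | exact Fin.ext hoj.symm
      | exact hoj.symm
  · have h2l : 2*ℓ < o := by omega
    have hoj : (o + j) % (3*ℓ) = o + j - 3*ℓ := by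
      rw [Nat.mod_eq_sub_mod (by omega), Nat.mod_eq_of_lt (by omega)]
    by_cases hkK : k + 1 < K
    · have h1 : 3*ℓ*k + o + j = 3*ℓ*(k+1) + (o + j - 3*ℓ) := by ring_nf; omega
      have h2 : 3*ℓ*k + o + j < K*(3*ℓ) := by
        have h3 : 3*ℓ*(k+2) ≤ 3*ℓ*K := Nat.mul_le_mul_left _ (by omega)
        nlinarith
      rw [bigStr_eval hℓ W _ (by rw [Nat.mod_eq_of_lt h2]; exact h2) (k+1) (o+j-3*ℓ) hkK
        (by omega) (by rw [Nat.mod_eq_of_lt h2]; exact h1)]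
      have ek : (k+1) % K = k+1 := Nat.mod_eq_of_lt hkK
      simp only [h2l, if_true]
      congr 1
      · exact congrArg W (Fin.ext ek.symm)
      · first
        | exact Fin.ext hoj.symm
        | exact hoj.symm
    · have hkK' : k + 1 = K := by omega
      have h1 : 3*ℓ*k + o + j = K*(3*ℓ) + (o + j - 3*ℓ) := by
        subst hkK'; ring_nf; omega
      have hmod : (3*ℓ*k + o + j) % (K*(3*ℓ)) = o + j - 3*ℓ := by
        rw [h1, Nat.add_mod_left, Nat.mod_eq_of_lt (by nlinarith)]
      rw [bigStr_eval hℓ W _ (by rw [hmod]; nlinarith) 0 (o+j-3*ℓ) hKpos (by omega)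
        (by rw [hmod]; ring_nf)]
      have ek : (k+1) % K = 0 := by rw [hkK', Nat.mod_self]
      simp only [h2l, if_true]
      congr 1
      · exact congrArg W (Fin.ext ek.symm)
      · first
        | exact Fin.ext hoj.symm
        | exact hoj.symm

def keff {K : ℕ} (a : ℕ) : ℕ :=
  if 2*ℓ < a % (3*ℓ) then (a/(3*ℓ)+1) % K else a/(3*ℓ)

lemma keff_lt (hℓ : 0 < ℓ) {K : ℕ} (hK : 0 < K) (a : Fin (K*(3*ℓ))) :
    keff (ℓ := ℓ) (K := K) (a:ℕ) < K := by
  unfold keff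
  split
  · exact Nat.mod_lt _ hK
  · exact Nat.div_lt_of_lt_mul (Nat.mul_comm K (3*ℓ) ▸ a.2)

def gk {K : ℕ} (p : Fin K × Fin (3*ℓ)) : ℕ :=
  if 2*ℓ < (p.2:ℕ) then ((p.1:ℕ) + (K-1)) % K else (p.1:ℕ)

lemma gk_lt {K : ℕ} (hK : 0 < K) (p : Fin K × Fin (3*ℓ)) : gk p < K := by
  unfold gk
  split
  · exact Nat.mod_lt _ hK
  · exact p.1.2

def fwd (hℓ : 0 < ℓ) {K : ℕ} (hK : 0 < K) (a : Fin (K*(3*ℓ))) : Fin K × Fin (3*ℓ) :=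
  (⟨keff (ℓ := ℓ) (K := K) (a:ℕ), keff_lt hℓ hK a⟩, ⟨(a:ℕ) % (3*ℓ), Nat.mod_lt _ (by omega)⟩)

def bwd (hℓ : 0 < ℓ) {K : ℕ} (hK : 0 < K) (p : Fin K × Fin (3*ℓ)) : Fin (K*(3*ℓ)) :=
  ⟨3*ℓ*(gk p) + (p.2:ℕ), by
    have h1 : gk p < K := gk_lt hK p
    have h2 := p.2.2
    have h3 : 3*ℓ*(gk p + 1) ≤ 3*ℓ*K := Nat.mul_le_mul_left _ (by omega)
    nlinarith⟩

lemma key' [NeZero q] {K : ℕ} (hℓ : 0 < ℓ) (hK : 0 < K) (W : Fin K → Wd q (2*ℓ))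
    (a : Fin (K*(3*ℓ))) (j : Fin ℓ) :
    bigStr K hℓ W ⟨((a:ℕ)+(j:ℕ)) % (K*(3*ℓ)), Nat.mod_lt _ a.pos⟩ =
      blk ℓ (W ⟨keff (ℓ := ℓ) (K := K) (a:ℕ), keff_lt hℓ hK a⟩)
        ⟨((a:ℕ)%(3*ℓ)+(j:ℕ))%(3*ℓ), Nat.mod_lt _ (by omega)⟩ := by
  have hdiv : (a:ℕ)/(3*ℓ) < K := Nat.div_lt_of_lt_mul (Nat.mul_comm K (3*ℓ) ▸ a.2)
  have hmod : (a:ℕ)%(3*ℓ) < 3*ℓ := Nat.mod_lt _ (by omega)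
  have h := key hℓ W ((a:ℕ)/(3*ℓ)) ((a:ℕ)%(3*ℓ)) hdiv hmod (j:ℕ) j.2
  have e : (a:ℕ) + (j:ℕ) = 3*ℓ*((a:ℕ)/(3*ℓ)) + ((a:ℕ)%(3*ℓ)) + (j:ℕ) := by
    conv_lhs => rw [← Nat.div_add_mod (a:ℕ) (3*ℓ)]
  have e2 : (⟨((a:ℕ)+(j:ℕ)) % (K*(3*ℓ)), Nat.mod_lt _ a.pos⟩ : Fin (K*(3*ℓ))) =
      ⟨(3*ℓ*((a:ℕ)/(3*ℓ)) + ((a:ℕ)%(3*ℓ)) + (j:ℕ)) % (K*(3*ℓ)),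
        Nat.mod_lt _ (Nat.mul_pos hK (by omega))⟩ := Fin.ext (by rw [← e])
  rw [e2, h]
  unfold keff
  rfl

lemma fwd_bwd (hℓ : 0 < ℓ) {K : ℕ} (hK : 0 < K) (p : Fin K × Fin (3*ℓ)) :
    fwd hℓ hK (bwd hℓ hK p) = p := by
  obtain ⟨⟨k, hk⟩, ⟨o, ho⟩⟩ := p
  have hgk : gk (K := K) (⟨k, hk⟩, ⟨o, ho⟩) < K := gk_lt hK _
  have hval : ((bwd hℓ hK (⟨k, hk⟩, ⟨o, ho⟩) : Fin (K*(3*ℓ))) : ℕ)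
      = 3*ℓ*(gk (⟨k, hk⟩, ⟨o, ho⟩)) + o := rfl
  have hm : (3*ℓ*(gk (⟨k, hk⟩, ⟨o, ho⟩)) + o) % (3*ℓ) = o := by
    rw [Nat.mul_add_mod, Nat.mod_eq_of_lt ho]
  have hd : (3*ℓ*(gk (⟨k, hk⟩, ⟨o, ho⟩)) + o) / (3*ℓ) = gk (⟨k, hk⟩, ⟨o, ho⟩) := by
    rw [Nat.mul_add_div (by omega), Nat.div_eq_of_lt ho]
    omega
  unfold fwd
  refine Prod.ext ?_ ?_
  · show (⟨keff (ℓ := ℓ) (K := K) _, _⟩ : Fin K) = ⟨k, hk⟩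
    apply Fin.ext
    show keff (ℓ := ℓ) (K := K) (3*ℓ*(gk (⟨k, hk⟩, ⟨o, ho⟩)) + o) = k
    unfold keff
    rw [hm, hd]
    unfold gk
    simp only
    by_cases h2l : 2*ℓ < o
    · simp only [h2l, if_true]
      rw [Nat.mod_add_mod]
      have : k + (K-1) + 1 = k + K := by omega
      rw [this, Nat.add_mod_right, Nat.mod_eq_of_lt hk]
    · simp only [h2l, if_false]
  · apply Fin.ext
    exact hm

lemma bwd_fwd (hℓ : 0 < ℓ) {K : ℕ} (hK : 0 < K) (a : Fin (K*(3*ℓ))) :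
    bwd hℓ hK (fwd hℓ hK a) = a := by
  apply Fin.ext
  show 3*ℓ*(gk (fwd hℓ hK a)) + ((a:ℕ) % (3*ℓ)) = (a:ℕ)
  have hdiv : (a:ℕ)/(3*ℓ) < K := Nat.div_lt_of_lt_mul (Nat.mul_comm K (3*ℓ) ▸ a.2)
  have hgk : gk (fwd hℓ hK a) = (a:ℕ)/(3*ℓ) := by
    unfold gk fwd keff
    simp only
    by_cases h2l : 2*ℓ < (a:ℕ) % (3*ℓ)
    · simp only [h2l, if_true]
      rw [Nat.mod_add_mod]
      have : (a:ℕ)/(3*ℓ) + 1 + (K-1) = (a:ℕ)/(3*ℓ) + K := by omega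
      rw [this, Nat.add_mod_right, Nat.mod_eq_of_lt hdiv]
    · simp only [h2l, if_false]
  rw [hgk, Nat.div_add_mod]

lemma cyclicOcc_bigStr [NeZero q] {K : ℕ} (hℓ : 0 < ℓ) (hK : 0 < K)
    (W : Fin K → Wd q (2*ℓ)) (w : Wd q ℓ) :
    cyclicOcc (bigStr K hℓ W) w = ∑ k : Fin K, cyclicOcc (blk ℓ (W k)) w := by
  classical
  have hsum : ∑ k : Fin K, cyclicOcc (blk ℓ (W k)) w =
      (univ.filter fun p : Fin K × Fin (3*ℓ) =>
        ∀ j : Fin ℓ, blk ℓ (W p.1) ⟨((p.2:ℕ) + (j:ℕ)) % (3*ℓ),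
          Nat.mod_lt _ p.2.pos⟩ = w j).card := by
    rw [Finset.card_filter, Fintype.sum_prod_type]
    simp only [cyclicOcc, Finset.card_filter]
  rw [hsum]
  unfold cyclicOcc
  refine Finset.card_bij' (fun a _ => fwd hℓ hK a) (fun p _ => bwd hℓ hK p) ?_ ?_ ?_ ?_
  · intro a ha
    simp only [Finset.mem_filter, Finset.mem_univ, true_and] at ha ⊢
    intro j
    show blk ℓ (W ⟨keff (ℓ := ℓ) (K := K) (a:ℕ), keff_lt hℓ hK a⟩)
      ⟨((a:ℕ)%(3*ℓ)+(j:ℕ))%(3*ℓ), Nat.mod_lt _ (by omega)⟩ = w j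
    rw [← key' hℓ hK W a j]
    exact ha j
  · intro p hp
    simp only [Finset.mem_filter, Finset.mem_univ, true_and] at hp ⊢
    intro j
    rw [← fwd_bwd hℓ hK p] at hp
    have h := key' hℓ hK W (bwd hℓ hK p) j
    rw [h]
    exact hp j
  · intro a _
    exact bwd_fwd hℓ hK a
  · intro p _
    exact fwd_bwd hℓ hK p


def emb [NeZero q] (u : Wd q ℓ) : Wd q (2*ℓ) :=
  fun p => if h : (p:ℕ) < ℓ then u ⟨p, h⟩ else 0

def app [NeZero q] (w : Wd q ℓ) (c : Fin q) : Wd q (2*ℓ) :=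
  fun p => if h : (p:ℕ) < ℓ then w ⟨p, h⟩ else c

def shiftW [NeZero q] (a : ℕ) (w : Wd q ℓ) : Wd q ℓ :=
  fun j => if h : a ≤ (j:ℕ) then w ⟨(j:ℕ) - a, by omega⟩ else 0

lemma blk_congr [NeZero q] (v : Wd q (2*ℓ)) {t s : ℕ} (pt : t < 3*ℓ) (ps : s < 3*ℓ)
    (h : t = s) : blk ℓ v ⟨t, pt⟩ = blk ℓ v ⟨s, ps⟩ := by
  subst h; rfl

lemma eval_at [NeZero q] (v : Wd q (2*ℓ)) (o : Fin (3*ℓ)) (j : Fin ℓ)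
    (t : ℕ) (ht : t < 3*ℓ) (he : ((o:ℕ)+(j:ℕ)) % (3*ℓ) = t) :
    blk ℓ v ⟨((o:ℕ)+(j:ℕ)) % (3*ℓ), Nat.mod_lt _ o.pos⟩ = blk ℓ v ⟨t, ht⟩ :=
  congrArg (blk ℓ v) (Fin.ext he)

lemma blk_emb_lt [NeZero q] (u : Wd q ℓ) (t : ℕ) (ht : t < 3*ℓ) (h : t < ℓ) :
    blk ℓ (emb u) ⟨t, ht⟩ = u ⟨t, h⟩ := by
  have h2 : t < 2*ℓ := by omega
  simp [blk, emb, h2, h]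

lemma blk_emb_ge [NeZero q] (u : Wd q ℓ) (t : ℕ) (ht : t < 3*ℓ) (h : ℓ ≤ t) :
    blk ℓ (emb u) ⟨t, ht⟩ = 0 := by
  by_cases h2 : t < 2*ℓ
  · simp [blk, emb, h2, Nat.not_lt.2 h]
  · simp [blk, emb, h2]

lemma blk_app_lt [NeZero q] (w : Wd q ℓ) (c : Fin q) (t : ℕ) (ht : t < 3*ℓ) (h : t < ℓ) :
    blk ℓ (app w c) ⟨t, ht⟩ = w ⟨t, h⟩ := by
  have h2 : t < 2*ℓ := by omega
  simp [blk, app, h2, h]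

lemma blk_app_mid [NeZero q] (w : Wd q ℓ) (c : Fin q) (t : ℕ) (ht : t < 3*ℓ)
    (h1 : ℓ ≤ t) (h2 : t < 2*ℓ) :
    blk ℓ (app w c) ⟨t, ht⟩ = c := by
  simp [blk, app, h2, Nat.not_lt.2 h1]

lemma blk_app_ge [NeZero q] (w : Wd q ℓ) (c : Fin q) (t : ℕ) (ht : t < 3*ℓ) (h : 2*ℓ ≤ t) :
    blk ℓ (app w c) ⟨t, ht⟩ = 0 := by
  simp [blk, app, Nat.not_lt.2 h]

/-- occurrence at position 0 when the first `ℓ` letters of `v` spell `w`. -/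
lemma occ_pos [NeZero q] (hℓ : 0 < ℓ) (v : Wd q (2*ℓ)) (w : Wd q ℓ)
    (hv : ∀ j : Fin ℓ, v ⟨(j:ℕ), by omega⟩ = w j) :
    1 ≤ cyclicOcc (blk ℓ v) w := by
  classical
  rw [cyclicOcc, Nat.one_le_iff_ne_zero, ← Nat.pos_iff_ne_zero, Finset.card_pos]
  refine ⟨⟨0, by omega⟩, ?_⟩
  simp only [Finset.mem_filter, Finset.mem_univ, true_and]
  intro j
  have he : (0 + (j:ℕ)) % (3*ℓ) = (j:ℕ) := by
    rw [Nat.zero_add]; exact Nat.mod_eq_of_lt (by omega)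
  rw [blk_congr v _ (show (j:ℕ) < 3*ℓ by omega) he]
  have hj : (j:ℕ) < ℓ := j.2
  rw [show blk ℓ v ⟨(j:ℕ), by omega⟩ = v ⟨(j:ℕ), by omega⟩ by simp [blk, show (j:ℕ) < 2*ℓ by omega]]
  exact hv j

lemma occ_le [NeZero q] (v : Wd q (2*ℓ)) (w : Wd q ℓ) :
    cyclicOcc (blk ℓ v) w ≤ 3*ℓ := by
  classical
  calc cyclicOcc (blk ℓ v) w ≤ (univ : Finset (Fin (3*ℓ))).card := Finset.card_filter_le _ _
  _ = 3*ℓ := by simp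

lemma occ_emb_elim [NeZero q] (hℓ : 0 < ℓ) (u w : Wd q ℓ) (hw : ∀ j, w j ≠ 0)
    (o : Fin (3*ℓ))
    (P : ∀ j : Fin ℓ, blk ℓ (emb u) ⟨((o:ℕ)+(j:ℕ)) % (3*ℓ), Nat.mod_lt _ o.pos⟩ = w j) :
    (o:ℕ) = 0 ∧ u = w := by
  have ho0 : (o:ℕ) = 0 := by
    by_contra h0
    by_cases hol : (o:ℕ) ≤ ℓ
    · have hj : ℓ - (o:ℕ) < ℓ := by omega
      have h := P ⟨ℓ - (o:ℕ), hj⟩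
      rw [eval_at _ _ _ ℓ (by omega)
        (by rw [show (o:ℕ) + ((⟨ℓ - (o:ℕ), hj⟩ : Fin ℓ):ℕ) = ℓ by simp; omega];
            exact Nat.mod_eq_of_lt (by omega))] at h
      rw [blk_emb_ge u ℓ (by omega) le_rfl] at h
      exact hw _ h.symm
    · have h := P ⟨0, hℓ⟩
      rw [eval_at _ _ _ (o:ℕ) o.2
        (by rw [show (o:ℕ) + ((⟨0, hℓ⟩ : Fin ℓ):ℕ) = (o:ℕ) by simp];
            exact Nat.mod_eq_of_lt o.2)] at h
      rw [blk_emb_ge u (o:ℕ) o.2 (by omega)] at h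
      exact hw _ h.symm
  refine ⟨ho0, funext fun j => ?_⟩
  have h := P j
  rw [eval_at _ _ _ (j:ℕ) (by omega)
    (by rw [ho0, Nat.zero_add]; exact Nat.mod_eq_of_lt (by omega))] at h
  rw [blk_emb_lt u (j:ℕ) (by omega) j.2] at h
  rw [← h]

lemma occ_emb [NeZero q] (hℓ : 0 < ℓ) (u w : Wd q ℓ) (hw : ∀ j, w j ≠ 0) :
    cyclicOcc (blk ℓ (emb u)) w = if u = w then 1 else 0 := by
  classical
  by_cases huw : u = w
  · subst huw
    rw [if_pos rfl, cyclicOcc, Finset.card_eq_one]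
    refine ⟨⟨0, by omega⟩, ?_⟩
    apply Finset.eq_singleton_iff_unique_mem.mpr
    constructor
    · simp only [Finset.mem_filter, Finset.mem_univ, true_and]
      intro j
      have he : (0 + (j:ℕ)) % (3*ℓ) = (j:ℕ) := by
        rw [Nat.zero_add]; exact Nat.mod_eq_of_lt (by omega)
      rw [blk_congr (emb u) _ (show (j:ℕ) < 3*ℓ by omega) he]
      exact blk_emb_lt u (j:ℕ) (by omega) j.2
    · intro o ho
      simp only [Finset.mem_filter, Finset.mem_univ, true_and] at ho
      exact Fin.ext (occ_emb_elim hℓ u u hw o ho).1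
  · rw [if_neg huw, cyclicOcc, Finset.card_eq_zero]
    apply Finset.eq_empty_iff_forall_notMem.mpr
    intro o ho
    simp only [Finset.mem_filter, Finset.mem_univ, true_and] at ho
    exact huw (occ_emb_elim hℓ u w hw o ho).2

lemma shiftW_apply_lt [NeZero q] (a : ℕ) (w : Wd q ℓ) (j : Fin ℓ) (h : (j:ℕ) < a) :
    shiftW a w j = 0 := dif_neg (by omega)

lemma shiftW_apply_ge [NeZero q] (a : ℕ) (w : Wd q ℓ) (j : Fin ℓ) (h : a ≤ (j:ℕ)) :
    shiftW a w j = w ⟨(j:ℕ) - a, by omega⟩ := dif_pos h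

lemma shiftW_shiftW [NeZero q] (a b : ℕ) (w : Wd q ℓ) :
    shiftW a (shiftW b w) = shiftW (a+b) w := by
  funext j
  by_cases h1 : a ≤ (j:ℕ)
  · rw [shiftW_apply_ge a _ j h1]
    by_cases h2 : a + b ≤ (j:ℕ)
    · rw [shiftW_apply_ge (w := w) b _ (by simp; omega),
        shiftW_apply_ge (a+b) w j h2]
      congr 1
      apply Fin.ext
      simp
      omega
    · rw [shiftW_apply_lt (w := w) b _ (by simp; omega),
        shiftW_apply_lt (a+b) w j (by omega)]
  · rw [shiftW_apply_lt a _ j (by omega), shiftW_apply_lt (a+b) w j (by omega)]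

lemma shiftW_fix [NeZero q] (t : ℕ) (ht : 1 ≤ t) (w : Wd q ℓ)
    (h : shiftW t w = w) : ∀ j, w j = 0 := by
  have key : ∀ m : ℕ, ∀ j : Fin ℓ, (j:ℕ) = m → w j = 0 := by
    intro m
    induction m using Nat.strong_induction_on with
    | _ m IH =>
      intro j hj
      rw [← congrFun h j]
      by_cases hle : t ≤ (j:ℕ)
      · rw [shiftW_apply_ge t w j hle]
        exact IH ((j:ℕ) - t) (by omega) _ rfl
      · exact shiftW_apply_lt t w j (by omega)
  exact fun j => key (j:ℕ) j rfl

/-- Classification of occurrences in the block of `app w c`. -/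
lemma occ_app_elim [NeZero q] (hℓ : 0 < ℓ) (w wt : Wd q ℓ) (c : Fin q)
    (o : Fin (3*ℓ))
    (P : ∀ j : Fin ℓ, blk ℓ (app w c) ⟨((o:ℕ)+(j:ℕ)) % (3*ℓ), Nat.mod_lt _ o.pos⟩ = wt j) :
    wt = w ∨ wt ⟨ℓ-1, by omega⟩ = c ∨ (wt ⟨0, hℓ⟩ = c ∧ wt ⟨ℓ-1, by omega⟩ = 0) ∨
      ∃ a, 1 ≤ a ∧ a ≤ ℓ ∧ wt = shiftW a w := by
  rcases Nat.lt_or_ge (o:ℕ) 1 with ho | ho1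
  · left
    funext j
    have h := P j
    rw [eval_at _ _ _ (j:ℕ) (by omega)
      (by rw [show (o:ℕ) + (j:ℕ) = (j:ℕ) by omega]; exact Nat.mod_eq_of_lt (by omega))] at h
    rw [blk_app_lt w c (j:ℕ) (by omega) j.2] at h
    exact h.symm
  rcases Nat.lt_or_ge ℓ (o:ℕ) with holg | hol
  swap
  · -- 1 ≤ o ≤ ℓ : last letter of wt is c
    right; left
    have h := P ⟨ℓ-1, by omega⟩
    rw [eval_at _ _ _ ((o:ℕ)+ℓ-1) (by omega)
      (by rw [show (o:ℕ) + ((⟨ℓ-1, by omega⟩ : Fin ℓ):ℕ) = (o:ℕ)+ℓ-1 by simp; omega];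
          exact Nat.mod_eq_of_lt (by omega))] at h
    rw [blk_app_mid w c ((o:ℕ)+ℓ-1) (by omega) (by omega) (by omega)] at h
    exact h.symm
  rcases Nat.lt_or_ge (o:ℕ) (2*ℓ) with ho2 | ho2
  · -- ℓ < o < 2ℓ
    right; right; left
    constructor
    · have h := P ⟨0, hℓ⟩
      rw [eval_at _ _ _ (o:ℕ) o.2
        (by rw [show (o:ℕ) + ((⟨0, hℓ⟩ : Fin ℓ):ℕ) = (o:ℕ) by simp];
            exact Nat.mod_eq_of_lt o.2)] at h
      rw [blk_app_mid w c (o:ℕ) o.2 (by omega) ho2] at h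
      exact h.symm
    · have h := P ⟨ℓ-1, by omega⟩
      rw [eval_at _ _ _ ((o:ℕ)+ℓ-1) (by omega)
        (by rw [show (o:ℕ) + ((⟨ℓ-1, by omega⟩ : Fin ℓ):ℕ) = (o:ℕ)+ℓ-1 by simp; omega];
            exact Nat.mod_eq_of_lt (by omega))] at h
      rw [blk_app_ge w c ((o:ℕ)+ℓ-1) (by omega) (by omega)] at h
      exact h.symm
  · -- 2ℓ ≤ o < 3ℓ : shift form with a = 3ℓ - o
    right; right; right
    refine ⟨3*ℓ - (o:ℕ), by have := o.2; omega, by omega, ?_⟩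
    funext j
    by_cases hja : (j:ℕ) < 3*ℓ - (o:ℕ)
    · have h := P j
      rw [eval_at _ _ _ ((o:ℕ)+(j:ℕ)) (by omega)
        (Nat.mod_eq_of_lt (by omega))] at h
      rw [blk_app_ge w c ((o:ℕ)+(j:ℕ)) (by omega) (by omega)] at h
      rw [← h, shiftW_apply_lt _ w j hja]
    · have h := P j
      have hwrap : ((o:ℕ)+(j:ℕ)) % (3*ℓ) = (j:ℕ) - (3*ℓ - (o:ℕ)) := by
        rw [Nat.mod_eq_sub_mod (by omega), Nat.mod_eq_of_lt (by omega)]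
        omega
      rw [eval_at _ _ _ ((j:ℕ) - (3*ℓ - (o:ℕ))) (by omega) hwrap] at h
      rw [blk_app_lt w c _ (by omega) (by omega)] at h
      rw [← h, shiftW_apply_ge _ w j (by omega)]

lemma rows_inj [NeZero q] (hq : 3 ≤ q) (hℓ : 0 < ℓ) (w w' : Wd q ℓ)
    (h : ∀ v : Wd q (2*ℓ), cyclicOcc (blk ℓ v) w = cyclicOcc (blk ℓ v) w') :
    w = w' := by
  classical
  by_contra hne
  have hc1 : (⟨1, by omega⟩ : Fin q) ≠ 0 := by
    intro hcon
    have := congrArg Fin.val hcon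
    simp at this
  have hc2 : (⟨2, by omega⟩ : Fin q) ≠ 0 := by
    intro hcon
    have := congrArg Fin.val hcon
    simp at this
  have main : ∀ (x y : Wd q ℓ), x ≠ y →
      (∀ v, cyclicOcc (blk ℓ v) x = cyclicOcc (blk ℓ v) y) →
      ∃ a, 1 ≤ a ∧ a ≤ ℓ ∧ y = shiftW a x := by
    intro x y hxy hv
    have get : ∀ c : Fin q, ∃ o : Fin (3*ℓ), ∀ j : Fin ℓ,
        blk ℓ (app x c) ⟨((o:ℕ)+(j:ℕ)) % (3*ℓ), Nat.mod_lt _ o.pos⟩ = y j := by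
      intro c
      have h1 : 1 ≤ cyclicOcc (blk ℓ (app x c)) x :=
        occ_pos hℓ _ _ (fun j => by simp [app, j.2])
      rw [hv (app x c)] at h1
      rw [cyclicOcc] at h1
      obtain ⟨o, ho⟩ := Finset.card_pos.mp h1
      simp only [Finset.mem_filter, Finset.mem_univ, true_and] at ho
      exact ⟨o, ho⟩
    obtain ⟨o1, P1⟩ := get ⟨1, by omega⟩
    obtain ⟨o2, P2⟩ := get ⟨2, by omega⟩
    have C1 := occ_app_elim hℓ x y _ o1 P1
    have C2 := occ_app_elim hℓ x y _ o2 P2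
    have h12 : ((⟨1, by omega⟩ : Fin q)) ≠ (⟨2, by omega⟩ : Fin q) := by
      intro hcon
      have := congrArg Fin.val hcon
      simp at this
    rcases C1 with h1 | h1 | ⟨h1a, h1b⟩ | ⟨a, ha1, ha2, ha3⟩
    · exact absurd h1 (Ne.symm hxy)
    · rcases C2 with h2 | h2 | ⟨h2a, h2b⟩ | ⟨a, ha1, ha2, ha3⟩
      · exact absurd h2 (Ne.symm hxy)
      · exact absurd (h1.symm.trans h2) h12
      · exact absurd (h1.symm.trans h2b) hc1
      · exact ⟨a, ha1, ha2, ha3⟩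
    · rcases C2 with h2 | h2 | ⟨h2a, h2b⟩ | ⟨a, ha1, ha2, ha3⟩
      · exact absurd h2 (Ne.symm hxy)
      · exact absurd (h2.symm.trans h1b) hc2
      · exact absurd (h1a.symm.trans h2a) h12
      · exact ⟨a, ha1, ha2, ha3⟩
    · exact ⟨a, ha1, ha2, ha3⟩
  obtain ⟨a, ha1, ha2, hyx⟩ := main w w' hne h
  obtain ⟨a', hb1, hb2, hxy'⟩ := main w' w (Ne.symm hne) (fun v => (h v).symm)
  rw [hyx, shiftW_shiftW] at hxy'
  have hz : ∀ j, w j = 0 := shiftW_fix (a'+a) (by omega) w hxy'.symm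
  apply hne
  funext j
  rw [hyx]
  by_cases hja : a ≤ (j:ℕ)
  · rw [shiftW_apply_ge a w j hja, hz, hz]
  · rw [shiftW_apply_lt a w j (by omega), hz]

lemma digits_inj (B : ℕ) (hB : 0 < B) : ∀ (m : ℕ) (f g : Fin m → ℕ),
    (∀ i, f i < B) → (∀ i, g i < B) →
    (∑ i, f i * B^(i:ℕ)) = (∑ i, g i * B^(i:ℕ)) → f = g := by
  intro m
  induction m with
  | zero => intro f g _ _ _; funext i; exact i.elim0
  | succ m IH =>
    intro f g hf hg h
    rw [Fin.sum_univ_succ, Fin.sum_univ_succ] at h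
    have e : ∀ (f : Fin (m+1) → ℕ),
        ∑ i : Fin m, f i.succ * B^((i.succ : Fin (m+1)):ℕ)
          = B * ∑ i : Fin m, f i.succ * B^(i:ℕ) := by
      intro f
      rw [Finset.mul_sum]
      apply Finset.sum_congr rfl
      intro i _
      rw [Fin.val_succ, pow_succ]
      ring
    rw [e f, e g] at h
    simp only [Fin.val_zero, pow_zero, mul_one] at h
    have h0 : f 0 = g 0 := by
      have h1 := congrArg (· % B) h
      simpa [Nat.add_mul_mod_self_left, Nat.mod_eq_of_lt (hf 0),
        Nat.mod_eq_of_lt (hg 0)] using h1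
    have h2 : ∑ i : Fin m, f i.succ * B^(i:ℕ) = ∑ i : Fin m, g i.succ * B^(i:ℕ) :=
      Nat.eq_of_mul_eq_mul_left hB (by omega)
    have h3 := IH (fun i => f i.succ) (fun i => g i.succ)
      (fun i => hf i.succ) (fun i => hg i.succ) h2
    funext i
    rcases Fin.eq_zero_or_eq_succ i with rfl | ⟨j, rfl⟩
    · exact h0
    · exact congrFun h3 j

variable (q ℓ) in
noncomputable def x0 [NeZero q] : Wd q ℓ → ℕ :=
  fun w => ∑ v : Wd q (2*ℓ),
    cyclicOcc (blk ℓ v) w * (3*ℓ+1)^((Fintype.equivFin (Wd q (2*ℓ))) v : ℕ)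

lemma x0_inj [NeZero q] (hq : 3 ≤ q) (hℓ : 0 < ℓ) :
    Function.Injective (x0 q ℓ) := by
  intro w w' h
  set eF := Fintype.equivFin (Wd q (2*ℓ)) with heF
  have hre : ∀ y : Wd q ℓ, x0 q ℓ y =
      ∑ i : Fin (Fintype.card (Wd q (2*ℓ))),
        cyclicOcc (blk ℓ (eF.symm i)) y * (3*ℓ+1)^(i:ℕ) := by
    intro y
    rw [x0, ← Equiv.sum_comp eF.symm
      (fun v => cyclicOcc (blk ℓ v) y * (3*ℓ+1)^((eF v : Fin _):ℕ))]
    apply Finset.sum_congr rfl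
    intro i _
    rw [Equiv.apply_symm_apply]
  rw [hre w, hre w'] at h
  have hdg := digits_inj (3*ℓ+1) (by omega) _
    (fun i => cyclicOcc (blk ℓ (eF.symm i)) w)
    (fun i => cyclicOcc (blk ℓ (eF.symm i)) w')
    (fun i => by
      show cyclicOcc (blk ℓ (eF.symm i)) w < 3*ℓ+1
      have := occ_le (q := q) (eF.symm i) w; omega)
    (fun i => by
      show cyclicOcc (blk ℓ (eF.symm i)) w' < 3*ℓ+1
      have := occ_le (q := q) (eF.symm i) w'; omega) h
  apply rows_inj hq hℓ w w'
  intro v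
  have := congrFun hdg (eF v)
  simpa using this

lemma feasible_comb [NeZero q] (hℓ : 0 < ℓ) (m : Wd q (2*ℓ) → ℕ) :
    IsFeasibleVec (fun w : Wd q ℓ => ∑ v : Wd q (2*ℓ), m v * cyclicOcc (blk ℓ v) w) := by
  classical
  by_cases hK : 0 < ∑ v : Wd q (2*ℓ), m v
  · set K := ∑ v : Wd q (2*ℓ), m v with hKdef
    have hcard : Fintype.card (Σ v : Wd q (2*ℓ), Fin (m v)) = K := by
      simp [Fintype.card_sigma, hKdef]
    set E := Fintype.equivFinOfCardEq hcard with hE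
    set W : Fin K → Wd q (2*ℓ) := fun k => (E.symm k).1 with hW
    refine ⟨K*(3*ℓ), bigStr K hℓ W, fun w => ?_⟩
    rw [cyclicOcc_bigStr hℓ hK W w]
    rw [show (fun k : Fin K => cyclicOcc (blk ℓ (W k)) w)
        = (fun k => (fun a : (Σ v : Wd q (2*ℓ), Fin (m v)) =>
            cyclicOcc (blk ℓ a.1) w) (E.symm k)) from rfl]
    rw [Equiv.sum_comp E.symm (fun a : (Σ v : Wd q (2*ℓ), Fin (m v)) =>
      cyclicOcc (blk ℓ a.1) w)]
    rw [← Finset.univ_sigma_univ, Finset.sum_sigma]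
    apply Finset.sum_congr rfl
    intro v _
    simp [mul_comm]
  · have hz : ∀ v : Wd q (2*ℓ), m v = 0 := by
      intro v
      by_contra hv
      exact hK (Finset.sum_pos' (fun _ _ => Nat.zero_le _)
        ⟨v, Finset.mem_univ v, by omega⟩)
    refine ⟨0, Fin.elim0, fun w => ?_⟩
    have : cyclicOcc (q := q) (n := 0) Fin.elim0 w = 0 := by
      rw [cyclicOcc]
      convert Finset.card_empty
      ext i
      exact i.elim0
    rw [this]
    apply Finset.sum_eq_zero
    intro v _
    rw [hz v, Nat.zero_mul]
variable (q ℓ) in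
def Sfin [NeZero q] : Finset (Wd q ℓ) := Finset.univ.filter (fun u => ∀ j, u j ≠ 0)

variable (q ℓ) in
noncomputable def Gbound [NeZero q] : ℕ :=
  (∑ v : Wd q (2*ℓ), (3*ℓ) * (3*ℓ+1)^((Fintype.equivFin (Wd q (2*ℓ))) v : ℕ)) + 1

lemma x0_lt [NeZero q] (w : Wd q ℓ) : x0 q ℓ w < Gbound q ℓ := by
  rw [x0, Gbound]
  have hle : ∑ v : Wd q (2*ℓ),
      cyclicOcc (blk ℓ v) w * (3*ℓ+1)^((Fintype.equivFin (Wd q (2*ℓ))) v : ℕ)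
      ≤ ∑ v : Wd q (2*ℓ), (3*ℓ) * (3*ℓ+1)^((Fintype.equivFin (Wd q (2*ℓ))) v : ℕ) := by
    apply Finset.sum_le_sum
    intro v _
    exact Nat.mul_le_mul_right _ (occ_le v w)
  omega

variable (q ℓ) in
noncomputable def xFull [NeZero q] (σ : Wd q ℓ → ℕ) : Wd q ℓ → ℕ :=
  fun w => x0 q ℓ w + Gbound q ℓ * ∑ u ∈ Sfin q ℓ, σ u * cyclicOcc (blk ℓ (emb u)) w

lemma xFull_feasible [NeZero q] (hℓ : 0 < ℓ) (σ : Wd q ℓ → ℕ) :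
    IsFeasibleVec (xFull q ℓ σ) := by
  classical
  set eF := Fintype.equivFin (Wd q (2*ℓ)) with heF
  set m : Wd q (2*ℓ) → ℕ := fun v =>
    (3*ℓ+1)^(eF v : ℕ) + Gbound q ℓ * ∑ u ∈ Sfin q ℓ, (if v = emb u then σ u else 0)
    with hm
  obtain ⟨n, s, hs⟩ := feasible_comb hℓ m
  refine ⟨n, s, fun w => ?_⟩
  rw [← hs w, xFull]
  have hτ : ∑ v : Wd q (2*ℓ),
      (∑ u ∈ Sfin q ℓ, if v = emb u then σ u else 0) * cyclicOcc (blk ℓ v) w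
      = ∑ u ∈ Sfin q ℓ, σ u * cyclicOcc (blk ℓ (emb u)) w := by
    calc ∑ v : Wd q (2*ℓ),
        (∑ u ∈ Sfin q ℓ, if v = emb u then σ u else 0) * cyclicOcc (blk ℓ v) w
        = ∑ v : Wd q (2*ℓ), ∑ u ∈ Sfin q ℓ,
            (if v = emb u then σ u * cyclicOcc (blk ℓ v) w else 0) := by
          apply Finset.sum_congr rfl
          intro v _
          rw [Finset.sum_mul]
          apply Finset.sum_congr rfl
          intro u _
          rw [ite_mul, zero_mul]
      _ = ∑ u ∈ Sfin q ℓ, ∑ v : Wd q (2*ℓ),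
            (if v = emb u then σ u * cyclicOcc (blk ℓ v) w else 0) := Finset.sum_comm
      _ = ∑ u ∈ Sfin q ℓ, σ u * cyclicOcc (blk ℓ (emb u)) w := by
          apply Finset.sum_congr rfl
          intro u _
          rw [Finset.sum_ite_eq' Finset.univ (emb u)
            (fun v => σ u * cyclicOcc (blk ℓ v) w)]
          simp
  have hexp : ∑ v : Wd q (2*ℓ), m v * cyclicOcc (blk ℓ v) w
      = (∑ v : Wd q (2*ℓ), (3*ℓ+1)^(eF v : ℕ) * cyclicOcc (blk ℓ v) w)
        + Gbound q ℓ * ∑ v : Wd q (2*ℓ),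
            (∑ u ∈ Sfin q ℓ, if v = emb u then σ u else 0) * cyclicOcc (blk ℓ v) w := by
    rw [Finset.mul_sum, ← Finset.sum_add_distrib]
    apply Finset.sum_congr rfl
    intro v _
    rw [hm]
    ring
  show x0 q ℓ w + Gbound q ℓ * ∑ u ∈ Sfin q ℓ, σ u * cyclicOcc (blk ℓ (emb u)) w
      = ∑ v : Wd q (2*ℓ), m v * cyclicOcc (blk ℓ v) w
  rw [hexp, hτ]
  congr 1
  rw [x0]
  exact Finset.sum_congr rfl (fun v _ => mul_comm _ _)

lemma xFull_on_S [NeZero q] (hℓ : 0 < ℓ) (σ : Wd q ℓ → ℕ) (u : Wd q ℓ)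
    (hu : u ∈ Sfin q ℓ) :
    xFull q ℓ σ u = x0 q ℓ u + Gbound q ℓ * σ u := by
  have hnz : ∀ j, u j ≠ 0 := (Finset.mem_filter.mp hu).2
  rw [xFull]
  congr 1
  congr 1
  calc ∑ u' ∈ Sfin q ℓ, σ u' * cyclicOcc (blk ℓ (emb u')) u
      = ∑ u' ∈ Sfin q ℓ, (if u' = u then σ u' else 0) := by
        apply Finset.sum_congr rfl
        intro u' _
        rw [occ_emb hℓ u' u hnz]
        by_cases h : u' = u <;> simp [h]
    _ = σ u := by
        rw [Finset.sum_ite_eq' (Sfin q ℓ) u σ, if_pos hu]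

lemma xFull_inj [NeZero q] (hq : 3 ≤ q) (hℓ : 0 < ℓ) (σ : Wd q ℓ → ℕ) :
    Function.Injective (xFull q ℓ σ) := by
  intro a b h
  have hGa : 0 < Gbound q ℓ := by rw [Gbound]; omega
  set Ea := ∑ u ∈ Sfin q ℓ, σ u * cyclicOcc (blk ℓ (emb u)) a with hEa
  set Eb := ∑ u ∈ Sfin q ℓ, σ u * cyclicOcc (blk ℓ (emb u)) b with hEb
  have h' : x0 q ℓ a + Gbound q ℓ * Ea = x0 q ℓ b + Gbound q ℓ * Eb := h
  have hxa := x0_lt (q := q) (ℓ := ℓ) a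
  have hxb := x0_lt (q := q) (ℓ := ℓ) b
  have hEab : Ea = Eb := by
    rcases Nat.lt_trichotomy Ea Eb with hlt | he | hlt
    · have h2 : Gbound q ℓ * (Ea + 1) ≤ Gbound q ℓ * Eb :=
        Nat.mul_le_mul_left _ (by omega)
      rw [Nat.mul_add, Nat.mul_one] at h2
      omega
    · exact he
    · have h2 : Gbound q ℓ * (Eb + 1) ≤ Gbound q ℓ * Ea :=
        Nat.mul_le_mul_left _ (by omega)
      rw [Nat.mul_add, Nat.mul_one] at h2
      omega
  rw [hEab] at h'
  exact x0_inj hq hℓ (by omega)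

lemma xFull_mono [NeZero q] (hℓ : 0 < ℓ) (σ : Wd q ℓ → ℕ) (a b : Wd q ℓ)
    (ha : a ∈ Sfin q ℓ) (hb : b ∈ Sfin q ℓ) (hσ : σ a < σ b) :
    xFull q ℓ σ a < xFull q ℓ σ b := by
  rw [xFull_on_S hℓ σ a ha, xFull_on_S hℓ σ b hb]
  have hxa := x0_lt (q := q) (ℓ := ℓ) a
  have h2 : Gbound q ℓ * (σ a + 1) ≤ Gbound q ℓ * σ b := Nat.mul_le_mul_left _ (by omega)
  rw [Nat.mul_add, Nat.mul_one] at h2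
  omega

lemma exists_perm {q ℓ : ℕ} (x : Wd q ℓ → ℕ) (hx : Function.Injective x) :
    ∃ π : Wd q ℓ ≃ Fin (Fintype.card (Wd q ℓ)),
      ∀ w w', (π w < π w' ↔ x w < x w') := by
  classical
  set T := Finset.image x Finset.univ with hT
  have hTcard : T.card = Fintype.card (Wd q ℓ) := by
    rw [hT, Finset.card_image_of_injective _ hx, Finset.card_univ]
  set iso := T.orderIsoOfFin hTcard with hiso
  have hmem : ∀ w, x w ∈ T := fun w => Finset.mem_image_of_mem x (Finset.mem_univ w)
  set φ : Wd q ℓ → {y // y ∈ T} := fun w => ⟨x w, hmem w⟩ with hφ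
  have hφinj : Function.Injective φ := fun a b hab => hx (congrArg Subtype.val hab)
  have hφbij : Function.Bijective φ := by
    rw [Fintype.bijective_iff_injective_and_card]
    exact ⟨hφinj, by rw [Fintype.card_coe, hTcard]⟩
  refine ⟨(Equiv.ofBijective φ hφbij).trans iso.symm.toEquiv, fun w w' => ?_⟩
  simp only [Equiv.trans_apply]
  have h1 : ∀ y y' : {z // z ∈ T}, iso.symm.toEquiv y < iso.symm.toEquiv y' ↔ y < y' :=
    fun y y' => iso.symm.lt_iff_lt
  rw [show (Equiv.ofBijective φ hφbij) w = φ w from rfl,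
      show (Equiv.ofBijective φ hφbij) w' = φ w' from rfl, h1]
  exact Subtype.mk_lt_mk

lemma equiv_order_unique {α : Type*} {M : ℕ} (e e' : α ≃ Fin M)
    (h : ∀ a b, e a < e b ↔ e' a < e' b) : e = e' := by
  have hsm : StrictMono (fun i : Fin M => e (e'.symm i)) := by
    intro i j hij
    have h2 : e' (e'.symm i) < e' (e'.symm j) := by
      rw [Equiv.apply_symm_apply, Equiv.apply_symm_apply]
      exact hij
    exact (h _ _).mpr h2
  let F : Fin M ≃o Fin M :=
    { toEquiv := e'.symm.trans e, map_rel_iff' := fun {a b} => hsm.le_iff_le }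
  have hf : F = OrderIso.refl (Fin M) := Subsingleton.elim _ _
  apply Equiv.ext
  intro a
  have h3 := congrArg (fun g : Fin M ≃o Fin M => g (e' a)) hf
  have h4 : e (e'.symm (e' a)) = e' a := h3
  simpa using h4

lemma card_Sfin [NeZero q] : (Sfin q ℓ).card = (q-1)^ℓ := by
  classical
  rw [← Fintype.card_coe]
  have e : {u // u ∈ Sfin q ℓ} ≃ (Fin ℓ → {c : Fin q // ¬ (c = 0)}) :=
    { toFun := fun u j => ⟨u.1 j, (Finset.mem_filter.mp u.2).2 j⟩
      invFun := fun f => ⟨fun j => (f j).1, Finset.mem_filter.mpr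
        ⟨Finset.mem_univ _, fun j => (f j).2⟩⟩
      left_inv := fun u => by ext j; rfl
      right_inv := fun f => by funext j; rfl }
  rw [Fintype.card_congr e, Fintype.card_fun]
  rw [Fintype.card_subtype_compl, Fintype.card_subtype_eq, Fintype.card_fin,
    Fintype.card_fin]

lemma count_lower [NeZero q] (hq : 3 ≤ q) (hℓ : 0 < ℓ) :
    Nat.factorial ((q-1)^ℓ) ≤ numFeasible q ℓ := by
  classical
  set M := (Sfin q ℓ).card with hM
  set σf : ({u // u ∈ Sfin q ℓ} ≃ Fin M) → Wd q ℓ → ℕ := fun e u =>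
    if h : u ∈ Sfin q ℓ then ((e ⟨u, h⟩ : Fin M) : ℕ) else 0 with hσf
  have spec : ∀ e : {u // u ∈ Sfin q ℓ} ≃ Fin M,
      ∀ w w', ((exists_perm (xFull q ℓ (σf e)) (xFull_inj hq hℓ (σf e))).choose w <
        (exists_perm (xFull q ℓ (σf e)) (xFull_inj hq hℓ (σf e))).choose w' ↔
        xFull q ℓ (σf e) w < xFull q ℓ (σf e) w') := fun e =>
    (exists_perm (xFull q ℓ (σf e)) (xFull_inj hq hℓ (σf e))).choose_spec
  set Θ : ({u // u ∈ Sfin q ℓ} ≃ Fin M) →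
      {π : Wd q ℓ ≃ Fin (Fintype.card (Wd q ℓ)) // FeasiblePerm π} := fun e =>
    ⟨(exists_perm (xFull q ℓ (σf e)) (xFull_inj hq hℓ (σf e))).choose,
      ⟨xFull q ℓ (σf e), xFull_feasible hℓ (σf e), xFull_inj hq hℓ (σf e), spec e⟩⟩
    with hΘ
  have hx_iff : ∀ (e : {u // u ∈ Sfin q ℓ} ≃ Fin M) (a b : {u // u ∈ Sfin q ℓ}),
      e a < e b ↔ xFull q ℓ (σf e) a.1 < xFull q ℓ (σf e) b.1 := by
    intro e a b
    have hva : σf e a.1 = (e a : ℕ) := by rw [hσf]; simp [a.2]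
    have hvb : σf e b.1 = (e b : ℕ) := by rw [hσf]; simp [b.2]
    constructor
    · intro hlt
      exact xFull_mono hℓ (σf e) a.1 b.1 a.2 b.2 (by rw [hva, hvb]; exact hlt)
    · intro hlt
      rcases lt_trichotomy (e a) (e b) with h | h | h
      · exact h
      · exfalso
        have : a = b := e.injective h
        subst this
        exact lt_irrefl _ hlt
      · exfalso
        have := xFull_mono hℓ (σf e) b.1 a.1 b.2 a.2 (by rw [hva, hvb]; exact h)
        omega
  have hΘinj : Function.Injective Θ := by
    intro e e' hee
    have hππ : (exists_perm (xFull q ℓ (σf e)) (xFull_inj hq hℓ (σf e))).choose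
        = (exists_perm (xFull q ℓ (σf e')) (xFull_inj hq hℓ (σf e'))).choose := by
      have := congrArg Subtype.val hee
      exact this
    apply equiv_order_unique
    intro a b
    rw [hx_iff e a b, ← spec e a.1 b.1, hππ, spec e' a.1 b.1, ← hx_iff e' a b]
  have hcount : Nat.card ({u // u ∈ Sfin q ℓ} ≃ Fin M) ≤ numFeasible q ℓ := by
    rw [numFeasible]
    exact Nat.card_le_card_of_injective Θ hΘinj
  have hcard2 : Nat.card ({u // u ∈ Sfin q ℓ} ≃ Fin M) = Nat.factorial M := by
    rw [Nat.card_eq_fintype_card,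
      Fintype.card_equiv (Fintype.equivFinOfCardEq (by rw [Fintype.card_coe])),
      Fintype.card_coe]
  rw [← card_Sfin (q := q) (ℓ := ℓ), ← hM, ← hcard2]
  exact hcount

lemma count_upper {q ℓ : ℕ} : numFeasible q ℓ ≤ Nat.factorial (q^ℓ) := by
  classical
  have h1 : numFeasible q ℓ ≤ Nat.card (Wd q ℓ ≃ Fin (Fintype.card (Wd q ℓ))) := by
    rw [numFeasible]
    exact Nat.card_le_card_of_injective Subtype.val Subtype.val_injective
  have h2 : Nat.card (Wd q ℓ ≃ Fin (Fintype.card (Wd q ℓ))) = Nat.factorial (q^ℓ) := by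
    rw [Nat.card_eq_fintype_card, Fintype.card_equiv (Fintype.equivFin _)]
    congr 1
    rw [show Fintype.card (Wd q ℓ) = q^ℓ by rw [Fintype.card_fun]; simp]
  omega

end Stmt9

namespace Stmt9

lemma log_fact_le (n : ℕ) : Real.log (Nat.factorial n) ≤ n * Real.log n := by
  induction n with
  | zero => simp
  | succ n IH =>
    have hf : (0:ℝ) < (Nat.factorial n : ℝ) := by exact_mod_cast Nat.factorial_pos n
    rw [Nat.factorial_succ, Nat.cast_mul, Real.log_mul (by positivity) (ne_of_gt hf)]
    have hlog : Real.log n ≤ Real.log ((n:ℝ)+1) := by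
      rcases Nat.eq_zero_or_pos n with rfl | hn
      · simp
      · apply Real.log_le_log (by exact_mod_cast hn)
        linarith
    have hmul : (n:ℝ) * Real.log n ≤ (n:ℝ) * Real.log ((n:ℝ)+1) :=
      mul_le_mul_of_nonneg_left hlog (Nat.cast_nonneg n)
    push_cast
    nlinarith

lemma le_log_fact (n : ℕ) : n * Real.log n - n ≤ Real.log (Nat.factorial n) := by
  induction n with
  | zero => simp
  | succ n IH =>
    have hf : (0:ℝ) < (Nat.factorial n : ℝ) := by exact_mod_cast Nat.factorial_pos n
    rw [Nat.factorial_succ, Nat.cast_mul, Real.log_mul (by positivity) (ne_of_gt hf)]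
    rcases Nat.eq_zero_or_pos n with rfl | hn
    · norm_num
    · have hpos : (0:ℝ) < n := by exact_mod_cast hn
      have hkey : Real.log ((n:ℝ)+1) - Real.log n ≤ 1 / n := by
        rw [← Real.log_div (by positivity) (ne_of_gt hpos)]
        have h1 := Real.log_le_sub_one_of_pos (show (0:ℝ) < ((n:ℝ)+1)/n by positivity)
        have he : ((n:ℝ)+1)/n - 1 = 1/n := by field_simp; ring
        linarith
      have hmul : (n:ℝ) * (Real.log ((n:ℝ)+1) - Real.log n) ≤ (n:ℝ) * (1/n) :=
        mul_le_mul_of_nonneg_left hkey (Nat.cast_nonneg n)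
      have hone : (n:ℝ) * (1/n) = 1 := by field_simp
      push_cast
      nlinarith

end Stmt9


/-- for fixed `ℓ ≥ 2`, the rate `R_{q,ℓ} = log₂ F_{q,ℓ} / log₂((q^ℓ)!)` tends
to `1` as `q → ∞`. -/
theorem stmt_9 (ℓ : ℕ) (hℓ : 2 ≤ ℓ) :
    Filter.Tendsto
      (fun q : ℕ =>
        Real.logb 2 (numFeasible q ℓ) / Real.logb 2 (Nat.factorial (q ^ ℓ)))
      Filter.atTop (nhds 1) := by
  classical
  have hl0 : 0 < ℓ := by omega
  -- the lower comparison function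
  set g : ℕ → ℝ := fun q =>
    (((q:ℝ)-1)/(q:ℝ))^ℓ *
      (((ℓ:ℝ) * Real.log ((q:ℝ)-1) - 1)/((ℓ:ℝ) * Real.log (q:ℝ))) with hg
  -- limit of g is 1
  have h1 : Filter.Tendsto (fun q : ℕ => ((q:ℝ)-1)/(q:ℝ)) Filter.atTop (nhds 1) := by
    have heq : ∀ᶠ q : ℕ in Filter.atTop,
        (1 - 1/(q:ℝ)) = ((q:ℝ)-1)/(q:ℝ) := by
      filter_upwards [Filter.eventually_ge_atTop 1] with q hq
      have hq0 : (q:ℝ) ≠ 0 := by positivity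
      field_simp
    have hbase : Filter.Tendsto (fun q : ℕ => 1 - 1/(q:ℝ)) Filter.atTop (nhds 1) := by
      have h2 := (tendsto_const_nhds :
        Filter.Tendsto (fun _ : ℕ => (1:ℝ)) Filter.atTop (nhds 1)).sub
        tendsto_one_div_atTop_nhds_zero_nat
      simpa using h2
    exact hbase.congr' heq
  have hlogq : Filter.Tendsto (fun q : ℕ => Real.log (q:ℝ)) Filter.atTop Filter.atTop :=
    Real.tendsto_log_atTop.comp tendsto_natCast_atTop_atTop
  have hinvlog : Filter.Tendsto (fun q : ℕ => (Real.log (q:ℝ))⁻¹) Filter.atTop (nhds 0) :=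
    hlogq.inv_tendsto_atTop
  have hA : Filter.Tendsto (fun q : ℕ => (((q:ℝ)-1)/(q:ℝ))^ℓ) Filter.atTop (nhds 1) := by
    have := h1.pow ℓ
    simpa using this
  have hratio : Filter.Tendsto (fun q : ℕ => Real.log ((q:ℝ)-1)/Real.log (q:ℝ))
      Filter.atTop (nhds 1) := by
    have hlog1 : Filter.Tendsto (fun q : ℕ => Real.log (((q:ℝ)-1)/(q:ℝ)))
        Filter.atTop (nhds 0) := by
      have hc := (Real.continuousAt_log (one_ne_zero)).tendsto
      have := hc.comp h1
      simpa [Function.comp_def] using this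
    have hprod : Filter.Tendsto
        (fun q : ℕ => 1 + Real.log (((q:ℝ)-1)/(q:ℝ)) * (Real.log (q:ℝ))⁻¹)
        Filter.atTop (nhds 1) := by
      have h2 := hlog1.mul hinvlog
      have h3 := (tendsto_const_nhds :
        Filter.Tendsto (fun _ : ℕ => (1:ℝ)) Filter.atTop (nhds 1)).add h2
      simpa using h3
    apply hprod.congr'
    filter_upwards [Filter.eventually_ge_atTop 2, hlogq.eventually_gt_atTop 0]
      with q hq hlq
    have hq1 : (1:ℝ) ≤ (q:ℝ) - 1 := by
      have : (2:ℝ) ≤ (q:ℝ) := by exact_mod_cast hq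
      linarith
    have hq0 : (q:ℝ) ≠ 0 := by positivity
    have hq10 : (q:ℝ) - 1 ≠ 0 := by linarith
    rw [Real.log_div hq10 hq0]
    field_simp
    ring
  have hB : Filter.Tendsto
      (fun q : ℕ => ((ℓ:ℝ) * Real.log ((q:ℝ)-1) - 1)/((ℓ:ℝ) * Real.log (q:ℝ)))
      Filter.atTop (nhds 1) := by
    have hsecond : Filter.Tendsto (fun q : ℕ => ((ℓ:ℝ))⁻¹ * (Real.log (q:ℝ))⁻¹)
        Filter.atTop (nhds 0) := by
      have := hinvlog.const_mul ((ℓ:ℝ))⁻¹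
      simpa using this
    have hsum := hratio.sub hsecond
    rw [sub_zero] at hsum
    apply hsum.congr'
    filter_upwards [Filter.eventually_ge_atTop 2, hlogq.eventually_gt_atTop 0]
      with q hq hlq
    have hl0' : ((ℓ:ℝ)) ≠ 0 := by positivity
    have hlq0 : Real.log (q:ℝ) ≠ 0 := ne_of_gt hlq
    field_simp
  have hgtend : Filter.Tendsto g Filter.atTop (nhds 1) := by
    have := hA.mul hB
    simpa [hg] using this
  -- squeeze
  apply tendsto_of_tendsto_of_tendsto_of_le_of_le' hgtend
    (tendsto_const_nhds :
      Filter.Tendsto (fun _ : ℕ => (1:ℝ)) Filter.atTop (nhds 1))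
  · -- g q ≤ f q eventually
    filter_upwards [Filter.eventually_ge_atTop 4] with q hq4
    haveI : NeZero q := ⟨by omega⟩
    have hq3 : 3 ≤ q := by omega
    set Mn := (q-1)^ℓ with hMn
    set Nn := q^ℓ with hNn
    have hM3 : 3 ≤ Mn := by
      calc 3 = 3^1 := by norm_num
      _ ≤ 3^ℓ := Nat.pow_le_pow_right (by norm_num) (by omega)
      _ ≤ (q-1)^ℓ := Nat.pow_le_pow_left (by omega) ℓ
    have hN2 : 2 ≤ Nn := by
      calc 2 ≤ 4 := by norm_num
      _ = 4^1 := by norm_num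
      _ ≤ 4^ℓ := Nat.pow_le_pow_right (by norm_num) (by omega)
      _ ≤ q^ℓ := Nat.pow_le_pow_left (by omega) ℓ
    have hlow : Nat.factorial Mn ≤ numFeasible q ℓ := Stmt9.count_lower hq3 hl0
    have hup : numFeasible q ℓ ≤ Nat.factorial Nn := Stmt9.count_upper
    have hMfact1 : (1:ℝ) ≤ (Nat.factorial Mn : ℝ) := by
      exact_mod_cast Nat.one_le_iff_ne_zero.mpr (Nat.factorial_ne_zero Mn)
    have hF1 : (1:ℝ) ≤ (numFeasible q ℓ : ℝ) := by
      have : 1 ≤ numFeasible q ℓ := le_trans (Nat.one_le_iff_ne_zero.mpr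
        (Nat.factorial_ne_zero Mn)) hlow
      exact_mod_cast this
    have hb : 0 < Real.log (Nat.factorial Nn : ℝ) := by
      apply Real.log_pos
      have h2 : 2 ≤ Nat.factorial Nn := le_trans hN2 (Nat.self_le_factorial Nn)
      exact_mod_cast Nat.lt_of_lt_of_le (by norm_num) h2
    -- rewrite logb ratio as log ratio
    have hlogb : Real.logb 2 (numFeasible q ℓ) / Real.logb 2 (Nat.factorial Nn)
        = Real.log (numFeasible q ℓ) / Real.log (Nat.factorial Nn) := by
      exact div_div_div_cancel_right₀
        (ne_of_gt (Real.log_pos (by norm_num : (1:ℝ) < 2))) _ _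
    rw [hlogb]
    -- numerator and denominator comparisons
    have hnum1 : (Mn:ℝ) * Real.log Mn - Mn ≤ Real.log (numFeasible q ℓ) := by
      calc (Mn:ℝ) * Real.log Mn - Mn ≤ Real.log (Nat.factorial Mn) := Stmt9.le_log_fact Mn
      _ ≤ Real.log (numFeasible q ℓ) := Real.log_le_log (by linarith) (by exact_mod_cast hlow)
    have hnum0 : 0 ≤ (Mn:ℝ) * Real.log Mn - Mn := by
      have hlogM : 1 ≤ Real.log (Mn:ℝ) := by
        rw [Real.le_log_iff_exp_le (by exact_mod_cast Nat.lt_of_lt_of_le (by norm_num) hM3)]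
        have := Real.exp_one_lt_d9
        have h3 : (3:ℝ) ≤ (Mn:ℝ) := by exact_mod_cast hM3
        linarith
      have hM0 : (0:ℝ) ≤ (Mn:ℝ) := Nat.cast_nonneg Mn
      nlinarith
    have hden : Real.log (Nat.factorial Nn : ℝ) ≤ (Nn:ℝ) * Real.log Nn :=
      Stmt9.log_fact_le Nn
    -- g q in num/den form
    have hcastM : (Mn:ℝ) = ((q:ℝ)-1)^ℓ := by
      rw [hMn]
      push_cast [Nat.cast_sub (show 1 ≤ q by omega)]
      ring
    have hcastN : (Nn:ℝ) = (q:ℝ)^ℓ := by rw [hNn]; push_cast; ring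
    have hgq : g q = ((Mn:ℝ) * Real.log Mn - Mn) / ((Nn:ℝ) * Real.log Nn) := by
      rw [hg]
      simp only
      rw [hcastM, hcastN, Real.log_pow, Real.log_pow, div_pow, div_mul_div_comm]
      congr 1
      ring
    rw [hgq]
    calc ((Mn:ℝ) * Real.log Mn - Mn) / ((Nn:ℝ) * Real.log Nn)
        ≤ ((Mn:ℝ) * Real.log Mn - Mn) / Real.log (Nat.factorial Nn : ℝ) :=
          div_le_div_of_nonneg_left hnum0 hb hden
      _ ≤ Real.log (numFeasible q ℓ) / Real.log (Nat.factorial Nn : ℝ) := by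
          gcongr
  · -- f q ≤ 1 eventually
    filter_upwards [Filter.eventually_ge_atTop 4] with q hq4
    haveI : NeZero q := ⟨by omega⟩
    have hq3 : 3 ≤ q := by omega
    have hN2 : 2 ≤ q^ℓ := by
      calc 2 ≤ 4 := by norm_num
      _ = 4^1 := by norm_num
      _ ≤ 4^ℓ := Nat.pow_le_pow_right (by norm_num) (by omega)
      _ ≤ q^ℓ := Nat.pow_le_pow_left (by omega) ℓ
    have hup : numFeasible q ℓ ≤ Nat.factorial (q^ℓ) := Stmt9.count_upper
    have hlow : Nat.factorial ((q-1)^ℓ) ≤ numFeasible q ℓ := Stmt9.count_lower hq3 hl0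
    have hF1 : (1:ℝ) ≤ (numFeasible q ℓ : ℝ) := by
      have : 1 ≤ numFeasible q ℓ := le_trans (Nat.one_le_iff_ne_zero.mpr
        (Nat.factorial_ne_zero _)) hlow
      exact_mod_cast this
    have hb : 0 < Real.log (Nat.factorial (q^ℓ) : ℝ) := by
      apply Real.log_pos
      have h2 : 2 ≤ Nat.factorial (q^ℓ) := le_trans hN2 (Nat.self_le_factorial _)
      exact_mod_cast Nat.lt_of_lt_of_le (by norm_num) h2
    have hlogb : Real.logb 2 (numFeasible q ℓ) / Real.logb 2 (Nat.factorial (q^ℓ))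
        = Real.log (numFeasible q ℓ) / Real.log (Nat.factorial (q^ℓ)) := by
      rw [Real.logb, Real.logb]
      exact div_div_div_cancel_right₀
        (ne_of_gt (Real.log_pos (by norm_num : (1:ℝ) < 2))) _ _
    rw [hlogb, div_le_one hb]
    exact Real.log_le_log (by linarith) (by exact_mod_cast hup)
end

section
/- Let q ≥ 3, ℓ ≥ 2, and k ≥ 2 be integers, and suppose there exists a [q^ℓ, k]-systematic code C ⊆ Φ_{q,ℓ} (with information set B ⊆ Σ^ℓ). Then k ≤ q^ℓ - q^{ℓ-1} + 1. -/
open Finset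

/-- `C` is an `[n,k]`-systematic code (`n = |A|`): there is an information set `B` of size
`k` with `|C| = k!` such that the projections of members of `C` onto `B` realize every
permutation of `B`. -/
def IsSystematic {A : Type*} [Fintype A] [DecidableEq A]
    (C : Finset (A ≃ Fin (Fintype.card A))) (k : ℕ) : Prop :=
  ∃ B : Finset A, B.card = k ∧ C.card = Nat.factorial k ∧
    ∀ σ : {a // a ∈ B} ≃ Fin B.card,
      ∃ π ∈ C, ∀ b b' : {a // a ∈ B}, σ b < σ b' ↔ π b.1 < π b'.1


section Aux

def Pre {q m : ℕ} (w : Wd q (m+2)) : Wd q (m+1) := fun j => w ⟨j.1, by omega⟩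
def Suf {q m : ℕ} (w : Wd q (m+2)) : Wd q (m+1) := fun j => w ⟨j.1+1, by omega⟩

lemma fEq {α : Type*} {n : ℕ} (v : Fin n → α) {a b : ℕ} (ha : a < n) (hb : b < n)
    (h : a = b) : v ⟨a, ha⟩ = v ⟨b, hb⟩ := by subst h; rfl

lemma sEq (s : Fin n → Fin q) {a b : ℕ} (ha : a < n) (hb : b < n) (h : a = b) :
    s ⟨a, ha⟩ = s ⟨b, hb⟩ := by subst h; rfl

def shiftf {q m : ℕ} (u : Wd q (m+1)) (a : Fin q) : Wd q (m+1) :=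
  fun j => if h : j.1 + 1 < m + 1 then u ⟨j.1 + 1, h⟩ else a

lemma sum_count (s : Fin n → Fin q) (u : Wd q (m+1))
    (f : Wd q (m+2) → Wd q (m+1)) (g : Fin n → ℕ)
    (hcomp : ∀ (i : Fin n) (w : Wd q (m+2)),
      (∀ j : Fin (m+2), s ⟨(i.1 + j.1) % n, Nat.mod_lt _ i.pos⟩ = w j) →
      (f w = u ↔ ∀ j : Fin (m+1), s ⟨(g i + j.1) % n, Nat.mod_lt _ i.pos⟩ = u j)) :
    ∑ w ∈ univ.filter (fun w : Wd q (m+2) => f w = u), cyclicOcc s w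
      = (univ.filter fun i : Fin n =>
          ∀ j : Fin (m+1), s ⟨(g i + j.1) % n, Nat.mod_lt _ i.pos⟩ = u j).card := by
  classical
  have H : ∀ i ∈ (univ.filter fun i : Fin n =>
          ∀ j : Fin (m+1), s ⟨(g i + j.1) % n, Nat.mod_lt _ i.pos⟩ = u j),
      (fun j : Fin (m+2) => s ⟨(i.1 + j.1) % n, Nat.mod_lt _ i.pos⟩)
        ∈ univ.filter (fun w : Wd q (m+2) => f w = u) := by
    intro i hi
    simp only [mem_filter, mem_univ, true_and] at hi ⊢
    exact (hcomp i _ (fun j => rfl)).mpr hi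
  rw [Finset.card_eq_sum_card_fiberwise H]
  apply Finset.sum_congr rfl
  intro w hw
  simp only [mem_filter, mem_univ, true_and] at hw
  unfold cyclicOcc
  congr 1
  ext i
  simp only [mem_filter, mem_univ, true_and]
  constructor
  · intro hocc
    have hgram : (fun j : Fin (m+2) => s ⟨(i.1 + j.1) % n, Nat.mod_lt _ i.pos⟩) = w :=
      funext hocc
    exact ⟨(hcomp i w hocc).mp hw, hgram⟩
  · rintro ⟨hi, hgram⟩ j
    exact congrFun hgram j

lemma flow (s : Fin n → Fin q) (u : Wd q (m+1)) :
    ∑ w ∈ univ.filter (fun w : Wd q (m+2) => Pre w = u), cyclicOcc s w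
      = ∑ w ∈ univ.filter (fun w : Wd q (m+2) => Suf w = u), cyclicOcc s w := by
  classical
  rw [sum_count s u Pre (fun i => i.1) ?hpre, sum_count s u Suf (fun i => (i.1+1) % n) ?hsuf]
  case hpre =>
    intro i w hocc
    constructor
    · intro hPre j
      exact (hocc ⟨j.1, by omega⟩).trans (congrFun hPre j)
    · intro hcond
      funext j
      exact (hocc ⟨j.1, by omega⟩).symm.trans (hcond j)
  case hsuf =>
    intro i w hocc
    have key : ∀ j : Fin (m+1), ((i.1+1) % n + j.1) % n = (i.1 + (j.1+1)) % n := by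
      intro j
      rw [Nat.mod_add_mod]
      congr 1
      omega
    constructor
    · intro hSuf j
      refine Eq.trans ?_ ((hocc ⟨j.1+1, by omega⟩).trans (congrFun hSuf j))
      exact sEq s _ _ (key j)
    · intro hcond
      funext j
      refine ((hocc ⟨j.1+1, by omega⟩).symm.trans ?_)
      exact (sEq s _ _ (key j).symm).trans (hcond j)
  apply Finset.card_bij'
    (fun (a : Fin n) (_ : a ∈ _) => (⟨(a.1 + n - 1) % n, Nat.mod_lt _ a.pos⟩ : Fin n))
    (fun (b : Fin n) (_ : b ∈ _) => (⟨(b.1 + 1) % n, Nat.mod_lt _ b.pos⟩ : Fin n))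
  · intro a ha
    simp only [mem_filter, mem_univ, true_and] at ha ⊢
    intro j
    have e1 : ((a.1 + n - 1) % n + 1) % n = a.1 := by
      rw [Nat.mod_add_mod, show a.1 + n - 1 + 1 = a.1 + n from by omega, Nat.add_mod_right]
      exact Nat.mod_eq_of_lt a.2
    have e : (((a.1 + n - 1) % n + 1) % n + j.1) % n = (a.1 + j.1) % n := by rw [e1]
    exact (sEq s _ _ e).trans (ha j)
  · intro b hb
    simp only [mem_filter, mem_univ, true_and] at hb ⊢
    intro j
    have e : ((b.1 + 1) % n + j.1) % n = ((b.1 + 1) % n + j.1) % n := rfl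
    exact hb j
  · intro a ha
    apply Fin.ext
    show ((a.1 + n - 1) % n + 1) % n = a.1
    rw [Nat.mod_add_mod, show a.1 + n - 1 + 1 = a.1 + n from by omega, Nat.add_mod_right]
    exact Nat.mod_eq_of_lt a.2
  · intro b hb
    apply Fin.ext
    show ((b.1 + 1) % n + n - 1) % n = b.1
    have hn : 0 < n := b.pos
    rw [show (b.1 + 1) % n + n - 1 = (b.1 + 1) % n + (n - 1) from by omega,
      Nat.mod_add_mod, show b.1 + 1 + (n - 1) = b.1 + n from by omega, Nat.add_mod_right]
    exact Nat.mod_eq_of_lt b.2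

lemma conn {q m : ℕ} (c : Wd q (m+1) → ℝ)
    (hstep : ∀ w : Wd q (m+2), c (Pre w) = c (Suf w)) (u u' : Wd q (m+1)) :
    c u = c u' := by
  have step : ∀ (v : Wd q (m+1)) (a : Fin q), c v = c (shiftf v a) := by
    intro v a
    have h := hstep (fun j : Fin (m+2) => if h : j.1 < m + 1 then v ⟨j.1, h⟩ else a)
    have h1 : Pre (fun j : Fin (m+2) => if h : j.1 < m + 1 then v ⟨j.1, h⟩ else a) = v := by
      funext j
      simp only [Pre]
      rw [dif_pos j.2]
    have h2 : Suf (fun j : Fin (m+2) => if h : j.1 < m + 1 then v ⟨j.1, h⟩ else a)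
        = shiftf v a := by
      funext j
      simp only [Suf, shiftf]
    rwa [h1, h2] at h
  have key : ∀ i : ℕ, ∀ v v' : Wd q (m+1),
      (∀ j : Fin (m+1), ∀ h : j.1 + i < m + 1, v' j = v ⟨j.1 + i, h⟩) → c v' = c v := by
    intro i
    induction i with
    | zero =>
      intro v v' hvv
      have : v' = v := by
        funext j
        have := hvv j (by omega)
        simpa using this
      rw [this]
    | succ i ih =>
      intro v v' hvv
      set v'' : Wd q (m+1) :=
        fun j => if h : j.1 + i < m + 1 then v ⟨j.1 + i, h⟩ else v' ⟨j.1 - 1, by omega⟩ with hv''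
      have h1 : c v'' = c v := ih v v'' (fun j h => by simp only [hv'', dif_pos h])
      have h2 : v' = shiftf v'' (v' ⟨m, by omega⟩) := by
        funext j
        simp only [shiftf]
        by_cases hj : j.1 + 1 < m + 1
        · rw [dif_pos hj]
          simp only [hv'']
          by_cases hji : j.1 + 1 + i < m + 1
          · rw [dif_pos hji]
            exact (hvv j (by omega)).trans (fEq v _ _ (by omega))
          · rw [dif_neg hji]
            exact (fEq v' _ _ (by omega)).symm
        · rw [dif_neg hj]
          exact (fEq v' _ _ (by omega)).symm
      rw [h2, ← step v'' (v' ⟨m, by omega⟩), h1]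
  have h1 := key (m+1) u u' (fun j h => by omega)
  have h2 := key (m+1) u u (fun j h => by omega)
  -- h1 : c u' = c u
  exact h1.symm

lemma rot_sum {q m : ℕ} (c : Wd q (m+1) → ℝ) :
    ∑ w : Wd q (m+2), c (Suf w) = ∑ w : Wd q (m+2), c (Pre w) := by
  classical
  have hbij : Function.Bijective
      (fun (w : Wd q (m+2)) => (fun j : Fin (m+2) => w ⟨(j.1+1) % (m+2), Nat.mod_lt _ (by omega)⟩ : Wd q (m+2))) := by
    rw [Fintype.bijective_iff_injective_and_card]
    refine ⟨?_, rfl⟩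
    intro w w' h
    funext j
    have hj : ((j.1 + (m+1)) % (m+2) + 1) % (m+2) = j.1 := by
      rw [Nat.mod_add_mod, show j.1 + (m+1) + 1 = j.1 + (m+2) from by omega, Nat.add_mod_right]
      exact Nat.mod_eq_of_lt j.2
    have := congrFun h ⟨(j.1 + (m+1)) % (m+2), Nat.mod_lt _ (by omega)⟩
    simp only at this
    calc w j = w ⟨((j.1 + (m+1)) % (m+2) + 1) % (m+2), Nat.mod_lt _ (by omega)⟩ :=
          (fEq w _ _ hj).symm
      _ = w' ⟨((j.1 + (m+1)) % (m+2) + 1) % (m+2), Nat.mod_lt _ (by omega)⟩ := this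
      _ = w' j := fEq w' _ _ hj
  refine Fintype.sum_bijective _ hbij _ _ ?_
  intro w
  congr 1
  funext j
  show w ⟨j.1+1, _⟩ = w ⟨(j.1+1) % (m+2), _⟩
  exact fEq w _ _ (Nat.mod_eq_of_lt (by omega)).symm

lemma exists_sep_equiv {α : Type*} [DecidableEq α] (B P : Finset α) (hPB : P ⊆ B) :
    ∃ σ : {a // a ∈ B} ≃ Fin B.card,
      ∀ (b b' : {a // a ∈ B}), b.1 ∉ P → b'.1 ∈ P → σ b < σ b' := by
  classical
  set R := B \ P with hR
  have hcard : R.card + P.card = B.card := Finset.card_sdiff_add_card_eq_card hPB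
  have memR : ∀ (b : {a // a ∈ B}), b.1 ∉ P → b.1 ∈ R := by
    intro b h
    rw [hR, Finset.mem_sdiff]
    exact ⟨b.2, h⟩
  set eP := P.equivFin with heP
  set eR := R.equivFin with heR
  set F : {a // a ∈ B} → Fin B.card := fun b =>
    if h : b.1 ∈ P then ⟨R.card + (eP ⟨b.1, h⟩).1, by have := (eP ⟨b.1, h⟩).2; omega⟩
    else ⟨(eR ⟨b.1, memR b h⟩).1, by have := (eR ⟨b.1, memR b h⟩).2; omega⟩ with hF
  have hinj : Function.Injective F := by
    intro b b' h
    simp only [hF] at h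
    by_cases h1 : b.1 ∈ P <;> by_cases h2 : b'.1 ∈ P
    · rw [dif_pos h1, dif_pos h2] at h
      have hv := congrArg Fin.val h
      simp only at hv
      have h3 : eP ⟨b.1, h1⟩ = eP ⟨b'.1, h2⟩ := Fin.ext (by omega)
      exact Subtype.ext (congrArg Subtype.val (eP.injective h3) :)
    · rw [dif_pos h1, dif_neg h2] at h
      have hv := congrArg Fin.val h
      simp only at hv
      have := (eR ⟨b'.1, memR b' h2⟩).2
      omega
    · rw [dif_neg h1, dif_pos h2] at h
      have hv := congrArg Fin.val h
      simp only at hv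
      have := (eR ⟨b.1, memR b h1⟩).2
      omega
    · rw [dif_neg h1, dif_neg h2] at h
      have hv := congrArg Fin.val h
      simp only at hv
      have h3 : eR ⟨b.1, memR b h1⟩ = eR ⟨b'.1, memR b' h2⟩ := Fin.ext (by omega)
      exact Subtype.ext (congrArg Subtype.val (eR.injective h3) :)
  have hbij : Function.Bijective F :=
    (Fintype.bijective_iff_injective_and_card F).mpr ⟨hinj, by simp [Fintype.card_coe]⟩
  refine ⟨Equiv.ofBijective F hbij, ?_⟩
  intro b b' hb hb'
  show F b < F b'
  simp only [hF]
  rw [dif_neg hb, dif_pos hb']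
  have := (eR ⟨b.1, memR b hb⟩).2
  simp only [Fin.lt_def]
  omega

end Aux

set_option maxHeartbeats 1600000 in
/-- if there exists a `[q^ℓ, k]`-systematic code consisting of feasible
permutations (with `q ≥ 3`, `ℓ ≥ 2`, `k ≥ 2`), then `k ≤ q^ℓ - q^{ℓ-1} + 1`. -/
theorem stmt_10 (q ℓ k : ℕ) (hq : 3 ≤ q) (hℓ : 2 ≤ ℓ) (hk : 2 ≤ k)
    (C : Finset (Wd q ℓ ≃ Fin (Fintype.card (Wd q ℓ))))
    (hC : ∀ π ∈ C, FeasiblePerm π)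
    (hsys : IsSystematic C k) :
    k ≤ q ^ ℓ - q ^ (ℓ - 1) + 1 := by
  classical
  by_contra hcon
  push_neg at hcon
  obtain ⟨m, rfl⟩ : ∃ m, ℓ = m + 2 := ⟨ℓ - 2, by omega⟩
  obtain ⟨B, hBcard, hCcard, hσall⟩ := hsys
  have hcardA : Fintype.card (Wd q (m+2)) = q ^ (m+2) := by
    simp [Fintype.card_fun]
  have hcardV : Fintype.card (Wd q (m+1)) = q ^ (m+1) := by
    simp [Fintype.card_fun]
  have hpow1 : q ^ 1 ≤ q ^ (m+1) := Nat.pow_le_pow_right (by omega) (by omega)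
  have hpow2 : q ^ (m+1) ≤ q ^ (m+2) := Nat.pow_le_pow_right (by omega) (by omega)
  rw [pow_one] at hpow1
  have hkA : k ≤ q ^ (m+2) := by
    rw [← hBcard, ← hcardA]
    exact le_trans (Finset.card_le_card (Finset.subset_univ B)) (by simp)
  set D : Finset (Wd q (m+2)) := univ \ B with hD
  have hDcard : D.card = q ^ (m+2) - k := by
    rw [hD, Finset.card_sdiff_of_subset (Finset.subset_univ B), hBcard, Finset.card_univ, hcardA]
  have hconn' : q ^ (m+2) - q ^ (m+1) + 1 < k := by
    have : (m+2) - 1 = m + 1 := by omega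
    rwa [this] at hcon
  have hDsmall : D.card + 2 ≤ q ^ (m+1) := by omega
  -- linear map
  set L : ((Wd q (m+1)) → ℝ) →ₗ[ℝ] ({w // w ∈ D} → ℝ) :=
    { toFun := fun c => fun d => c (Pre d.1) - c (Suf d.1)
      map_add' := by intro a b; funext d; simp; ring
      map_smul' := by intro r a; funext d; simp [smul_eq_mul]; ring } with hL
  have hrank : 2 ≤ Module.finrank ℝ (LinearMap.ker L) := by
    have h1 := LinearMap.finrank_range_add_finrank_ker L
    have h2 : Module.finrank ℝ ((Wd q (m+1)) → ℝ) = q ^ (m+1) := by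
      rw [Module.finrank_fintype_fun_eq_card, hcardV]
    have h3 : Module.finrank ℝ (LinearMap.range L) ≤ D.card := by
      have := Submodule.finrank_le (LinearMap.range L)
      rwa [Module.finrank_fintype_fun_eq_card, Fintype.card_coe] at this
    omega
  -- get a nonconstant kernel element
  have u₀ : Wd q (m+1) := fun _ => ⟨0, by omega⟩
  have hex : ∃ c ∈ LinearMap.ker L, ∃ u u' : Wd q (m+1), c u ≠ c u' := by
    by_contra hno
    push_neg at hno
    have hone : (fun _ => (1:ℝ) : Wd q (m+1) → ℝ) ≠ 0 := by
      intro h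
      have := congrFun h u₀
      norm_num at this
    have hle : LinearMap.ker L ≤ Submodule.span ℝ {(fun _ => (1:ℝ) : Wd q (m+1) → ℝ)} := by
      intro c hc
      rw [Submodule.mem_span_singleton]
      refine ⟨c u₀, ?_⟩
      funext u
      simp [hno c hc u₀ u]
    have h1 := Submodule.finrank_mono hle
    rw [finrank_span_singleton hone] at h1
    omega
  obtain ⟨c, hcker, u1, u2, hcne⟩ := hex
  set coeff : Wd q (m+2) → ℝ := fun w => c (Pre w) - c (Suf w) with hcoeff
  have hco0 : ∀ w : Wd q (m+2), w ∉ B → coeff w = 0 := by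
    intro w hw
    have hwD : w ∈ D := by rw [hD, Finset.mem_sdiff]; exact ⟨Finset.mem_univ _, hw⟩
    have := LinearMap.mem_ker.mp hcker
    exact congrFun this ⟨w, hwD⟩
  have hsum0 : ∑ w : Wd q (m+2), coeff w = 0 := by
    rw [hcoeff]
    rw [Finset.sum_sub_distrib, rot_sum c, sub_self]
  have hwne : ∃ w : Wd q (m+2), coeff w ≠ 0 := by
    by_contra hnone
    push_neg at hnone
    have hstep : ∀ w : Wd q (m+2), c (Pre w) = c (Suf w) := by
      intro w
      have := hnone w
      rw [hcoeff] at this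
      simpa [sub_eq_zero] using this
    exact hcne (conn c hstep u1 u2)
  set P : Finset (Wd q (m+2)) := univ.filter (fun w => 0 < coeff w) with hP
  set N : Finset (Wd q (m+2)) := univ.filter (fun w => coeff w < 0) with hN
  have hPB : P ⊆ B := by
    intro w hw
    rw [hP, Finset.mem_filter] at hw
    by_contra hwB
    have := hco0 w hwB
    linarith [hw.2]
  have hNB : N ⊆ B := by
    intro w hw
    rw [hN, Finset.mem_filter] at hw
    by_contra hwB
    have := hco0 w hwB
    linarith [hw.2]
  have hdisj : Disjoint P N := by
    rw [Finset.disjoint_left]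
    intro w hwP hwN
    rw [hP, Finset.mem_filter] at hwP
    rw [hN, Finset.mem_filter] at hwN
    linarith [hwP.2, hwN.2]
  have hPNsum : ∑ w ∈ P, coeff w + ∑ w ∈ N, coeff w = 0 := by
    have h1 : ∑ w ∈ P ∪ N, coeff w = ∑ w : Wd q (m+2), coeff w := by
      apply Finset.sum_subset (Finset.subset_univ _)
      intro w _ hw
      rw [Finset.mem_union, hP, hN, Finset.mem_filter, Finset.mem_filter] at hw
      push_neg at hw
      have h2 := hw.1 (Finset.mem_univ w)
      have h3 := hw.2 (Finset.mem_univ w)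
      linarith
    rw [← Finset.sum_union hdisj, h1, hsum0]
  have hPpos : ∀ w ∈ P, 0 < coeff w := fun w hw => (Finset.mem_filter.mp hw).2
  have hNneg : ∀ w ∈ N, coeff w < 0 := fun w hw => (Finset.mem_filter.mp hw).2
  have hPne : P.Nonempty ∧ N.Nonempty := by
    obtain ⟨w0, hw0⟩ := hwne
    have hiff1 : P.Nonempty → N.Nonempty := by
      intro hp
      by_contra hn
      rw [Finset.not_nonempty_iff_eq_empty] at hn
      rw [hn, Finset.sum_empty, add_zero] at hPNsum
      have := Finset.sum_pos hPpos hp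
      linarith
    have hiff2 : N.Nonempty → P.Nonempty := by
      intro hn
      by_contra hp
      rw [Finset.not_nonempty_iff_eq_empty] at hp
      rw [hp, Finset.sum_empty, zero_add] at hPNsum
      have : ∑ w ∈ N, coeff w < 0 := Finset.sum_neg hNneg hn
      linarith
    rcases lt_trichotomy (coeff w0) 0 with h | h | h
    · have hw0N : w0 ∈ N := by rw [hN, Finset.mem_filter]; exact ⟨Finset.mem_univ _, h⟩
      exact ⟨hiff2 ⟨w0, hw0N⟩, ⟨w0, hw0N⟩⟩
    · exact absurd h hw0
    · have hw0P : w0 ∈ P := by rw [hP, Finset.mem_filter]; exact ⟨Finset.mem_univ _, h⟩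
      exact ⟨⟨w0, hw0P⟩, hiff1 ⟨w0, hw0P⟩⟩
  obtain ⟨hPnon, hNnon⟩ := hPne
  -- σ and π and x
  obtain ⟨σ, hsep⟩ := exists_sep_equiv B P hPB
  obtain ⟨π, hπC, hπ⟩ := hσall σ
  obtain ⟨x, hxfe, hxinj, hxord⟩ := hC π hπC
  obtain ⟨n, strg, hx⟩ := hxfe
  -- x is larger on P than on N
  have hxlt : ∀ p ∈ P, ∀ w ∈ N, x w < x p := by
    intro p hp w hw
    have hpB : p ∈ B := hPB hp
    have hwB : w ∈ B := hNB hw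
    have hwnP : w ∉ P := Finset.disjoint_right.mp hdisj hw
    have := hsep ⟨w, hwB⟩ ⟨p, hpB⟩ hwnP hp
    exact (hxord w p).mp ((hπ ⟨w, hwB⟩ ⟨p, hpB⟩).mp this)
  -- the vanishing weighted sum
  have hflowx : ∀ u : Wd q (m+1),
      ∑ w ∈ univ.filter (fun w : Wd q (m+2) => Pre w = u), (x w : ℝ)
        = ∑ w ∈ univ.filter (fun w : Wd q (m+2) => Suf w = u), (x w : ℝ) := by
    intro u
    have h := flow strg u
    have h1 : ∑ w ∈ univ.filter (fun w : Wd q (m+2) => Pre w = u), x w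
        = ∑ w ∈ univ.filter (fun w : Wd q (m+2) => Suf w = u), x w := by
      calc ∑ w ∈ univ.filter (fun w : Wd q (m+2) => Pre w = u), x w
          = ∑ w ∈ univ.filter (fun w : Wd q (m+2) => Pre w = u), cyclicOcc strg w :=
            Finset.sum_congr rfl (fun w _ => hx w)
        _ = ∑ w ∈ univ.filter (fun w : Wd q (m+2) => Suf w = u), cyclicOcc strg w := h
        _ = ∑ w ∈ univ.filter (fun w : Wd q (m+2) => Suf w = u), x w :=
            Finset.sum_congr rfl (fun w _ => (hx w).symm)
    exact_mod_cast congrArg (Nat.cast : ℕ → ℝ) h1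
  have hZ : ∑ w : Wd q (m+2), coeff w * (x w : ℝ) = 0 := by
    have hfib : ∀ (f : Wd q (m+2) → Wd q (m+1)),
        ∑ w : Wd q (m+2), c (f w) * (x w : ℝ)
          = ∑ u : Wd q (m+1), c u * ∑ w ∈ univ.filter (fun w => f w = u), (x w : ℝ) := by
      intro f
      rw [← Finset.sum_fiberwise univ f (fun w => c (f w) * (x w : ℝ))]
      apply Finset.sum_congr rfl
      intro u _
      rw [Finset.mul_sum]
      apply Finset.sum_congr rfl
      intro w hw
      rw [(Finset.mem_filter.mp hw).2]
    have e1 : ∑ w : Wd q (m+2), coeff w * (x w : ℝ)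
        = ∑ w : Wd q (m+2), c (Pre w) * (x w : ℝ)
          - ∑ w : Wd q (m+2), c (Suf w) * (x w : ℝ) := by
      rw [← Finset.sum_sub_distrib]
      apply Finset.sum_congr rfl
      intro w _
      rw [hcoeff]
      ring
    rw [e1, hfib Pre, hfib Suf]
    rw [← Finset.sum_sub_distrib]
    apply Finset.sum_eq_zero
    intro u _
    rw [hflowx u]
    ring
  -- final contradiction
  obtain ⟨p0, hp0P, hp0min⟩ := P.exists_min_image x hPnon
  obtain ⟨n0, hn0N, hn0max⟩ := N.exists_max_image x hNnon
  set S : ℝ := ∑ w ∈ P, coeff w with hS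
  have hSpos : 0 < S := Finset.sum_pos hPpos hPnon
  have hsplit : ∑ w ∈ P, coeff w * (x w : ℝ) + ∑ w ∈ N, coeff w * (x w : ℝ) = 0 := by
    have h1 : ∑ w ∈ P ∪ N, coeff w * (x w : ℝ) = ∑ w : Wd q (m+2), coeff w * (x w : ℝ) := by
      apply Finset.sum_subset (Finset.subset_univ _)
      intro w _ hw
      rw [Finset.mem_union, hP, hN, Finset.mem_filter, Finset.mem_filter] at hw
      push_neg at hw
      have h2 := hw.1 (Finset.mem_univ w)
      have h3 := hw.2 (Finset.mem_univ w)
      have : coeff w = 0 := by linarith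
      rw [this, zero_mul]
    rw [← Finset.sum_union hdisj, h1, hZ]
  have h1 : S * (x p0 : ℝ) ≤ ∑ w ∈ P, coeff w * (x w : ℝ) := by
    rw [hS, Finset.sum_mul]
    apply Finset.sum_le_sum
    intro w hw
    apply mul_le_mul_of_nonneg_left _ (le_of_lt (hPpos w hw))
    exact_mod_cast hp0min w hw
  have h2 : (-S) * (x n0 : ℝ) ≤ ∑ w ∈ N, coeff w * (x w : ℝ) := by
    have hNS : ∑ w ∈ N, coeff w = -S := by rw [hS]; linarith
    rw [← hNS, Finset.sum_mul]
    apply Finset.sum_le_sum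
    intro w hw
    apply mul_le_mul_of_nonpos_left _ (le_of_lt (hNneg w hw))
    exact_mod_cast hn0max w hw
  have hlt : (x n0 : ℝ) < (x p0 : ℝ) := by exact_mod_cast hxlt p0 hp0P n0 hn0N
  nlinarith [mul_pos hSpos (sub_pos.mpr hlt)]
end

section
/- Let G = (V,E) be a finite balanced directed graph with real edge weights, with |V| = m. Suppose e_0, e_1, …, e_{m-2} are edges forming a Hamiltonian path, where e_i goes from v_i to v_{i+1} and v_0, …, v_{m-1} is an enumeration of V; set E'_H = {e_0, …, e_{m-2}}. If wt(e) ≥ 0 for every e ∈ E \ E'_H, then for each i ∈ {0,…,m-2}, |wt(e_i)| ≤ Σ_{e ∈ E \ E'_H} wt(e). -/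
open Finset

/-- let `G` be a finite balanced weighted directed graph with `|V| = m`, and
let `e_0, …, e_{m-2}` be the edges of a Hamiltonian path (`e_i : v_i → v_{i+1}` for an
enumeration `v` of `V`).  If all edges outside `E'_H = {e_0, …, e_{m-2}}` have nonnegative
weight, then `|wt(e_i)| ≤ Σ_{e ∈ E \ E'_H} wt(e)` for every `i`. -/
theorem stmt_11 {V E : Type*} [Fintype V] [Fintype E] [DecidableEq V] [DecidableEq E]
    (src dst : E → V) (wt : E → ℝ) (m : ℕ) (hm : Fintype.card V = m)
    (hbal : ∀ v : V, ∑ e ∈ Finset.univ.filter (fun e => dst e = v), wt e =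
      ∑ e ∈ Finset.univ.filter (fun e => src e = v), wt e)
    (v : Fin m → V) (hv : Function.Bijective v)
    (e : Fin (m - 1) → E)
    (hsrc : ∀ i : Fin (m - 1), src (e i) = v ⟨i.1, by have := i.isLt; omega⟩)
    (hdst : ∀ i : Fin (m - 1), dst (e i) = v ⟨i.1 + 1, by have := i.isLt; omega⟩)
    (hnn : ∀ e' : E, e' ∉ Finset.image e Finset.univ → 0 ≤ wt e') :
    ∀ i : Fin (m - 1),
      |wt (e i)| ≤ ∑ e' ∈ Finset.univ \ Finset.image e Finset.univ, wt e' := by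
  intro i
  have hi : (i : ℕ) < m - 1 := i.isLt
  set σ := Equiv.ofBijective v hv with hσ
  set S : Finset V := Finset.univ.filter (fun x => ((σ.symm x : Fin m) : ℕ) ≤ i.1) with hS
  have hmem : ∀ j : Fin m, v j ∈ S ↔ (j : ℕ) ≤ i.1 := by
    intro j
    have : σ.symm (v j) = j := by
      rw [Equiv.symm_apply_eq]; rfl
    simp [hS, this]
  -- balance over the cut S
  have hbalS : ∑ e' ∈ Finset.univ.filter (fun e' => dst e' ∈ S), wt e'
             = ∑ e' ∈ Finset.univ.filter (fun e' => src e' ∈ S), wt e' := by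
    rw [← Finset.sum_fiberwise_eq_sum_filter Finset.univ S dst wt,
        ← Finset.sum_fiberwise_eq_sum_filter Finset.univ S src wt]
    exact Finset.sum_congr rfl fun x _ => hbal x
  set In : Finset E := Finset.univ.filter (fun e' => dst e' ∈ S ∧ src e' ∉ S) with hIn
  set Out : Finset E := Finset.univ.filter (fun e' => src e' ∈ S ∧ dst e' ∉ S) with hOut
  have hcut : ∑ e' ∈ In, wt e' = ∑ e' ∈ Out, wt e' := by
    have h1 := Finset.sum_filter_add_sum_filter_not
      (Finset.univ.filter (fun e' => dst e' ∈ S)) (fun e' => src e' ∈ S) wt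
    have h2 := Finset.sum_filter_add_sum_filter_not
      (Finset.univ.filter (fun e' => src e' ∈ S)) (fun e' => dst e' ∈ S) wt
    rw [hbalS] at h1
    simp only [Finset.filter_filter] at h1 h2
    have hcomm : Finset.univ.filter (fun e' => dst e' ∈ S ∧ src e' ∈ S)
        = Finset.univ.filter (fun e' => src e' ∈ S ∧ dst e' ∈ S) := by
      apply Finset.filter_congr; intro x _; simp [and_comm]
    rw [hcomm] at h1
    have := h1.trans h2.symm
    simpa [hIn, hOut] using (add_left_cancel this)
  have hei : e i ∈ Out := by
    rw [hOut, Finset.mem_filter]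
    refine ⟨Finset.mem_univ _, ?_, ?_⟩
    · rw [hsrc i, hmem]
    · rw [hdst i, hmem]; simp only [Fin.val_mk]; omega
  -- In contains no path edge
  have hInsub : In ⊆ Finset.univ \ Finset.image e Finset.univ := by
    intro x hx
    rw [hIn, Finset.mem_filter] at hx
    rw [Finset.mem_sdiff]
    refine ⟨Finset.mem_univ _, fun hmemx => ?_⟩
    obtain ⟨j, _, rfl⟩ := Finset.mem_image.mp hmemx
    rw [hdst j, hmem] at hx
    rw [hsrc j, hmem] at hx
    simp only [Fin.val_mk] at hx
    omega
  have hOutsub : Out.erase (e i) ⊆ Finset.univ \ Finset.image e Finset.univ := by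
    intro x hx
    rw [Finset.mem_erase] at hx
    obtain ⟨hne, hx⟩ := hx
    rw [hOut, Finset.mem_filter] at hx
    rw [Finset.mem_sdiff]
    refine ⟨Finset.mem_univ _, fun hmemx => ?_⟩
    obtain ⟨j, _, rfl⟩ := Finset.mem_image.mp hmemx
    rw [hsrc j, hmem] at hx
    rw [hdst j, hmem] at hx
    simp only [Fin.val_mk] at hx
    exact hne (congrArg e (Fin.ext (by omega)))
  have hsplit : ∑ e' ∈ Out, wt e' = wt (e i) + ∑ e' ∈ Out.erase (e i), wt e' :=
    (Finset.add_sum_erase _ wt hei).symm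
  set T := ∑ e' ∈ Finset.univ \ Finset.image e Finset.univ, wt e' with hT
  have hnn' : ∀ x ∈ Finset.univ \ Finset.image e Finset.univ, 0 ≤ wt x := by
    intro x hx; exact hnn x (Finset.mem_sdiff.mp hx).2
  have hInle : ∑ e' ∈ In, wt e' ≤ T :=
    Finset.sum_le_sum_of_subset_of_nonneg hInsub (fun x hx _ => hnn' x hx)
  have hInnn : 0 ≤ ∑ e' ∈ In, wt e' :=
    Finset.sum_nonneg fun x hx => hnn' x (hInsub hx)
  have hOutle : ∑ e' ∈ Out.erase (e i), wt e' ≤ T :=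
    Finset.sum_le_sum_of_subset_of_nonneg hOutsub (fun x hx _ => hnn' x hx)
  have hOutnn : 0 ≤ ∑ e' ∈ Out.erase (e i), wt e' :=
    Finset.sum_nonneg fun x hx => hnn' x (hOutsub hx)
  have key : wt (e i) = ∑ e' ∈ In, wt e' - ∑ e' ∈ Out.erase (e i), wt e' := by
    rw [hcut] at *; linarith [hsplit]
  rw [abs_le]; constructor <;> linarith
end
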